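/- arXiv:2506.20656 — 7 statements merged into one kernel-verified Lean document; each statement's English description precedes it below -/
import Mathlib

section
/- Fix natural numbers k ≥ 2 and n ≥ 1. For every traversal string t of length n, ∏_{ℓ=1}^n t(ℓ) + ∏_{ℓ=1}^n (k + 1 − t(ℓ)) ≤ k^n + 1; equivalently A(t) ≤ B(t), so every landing range is a nonempty integer interval. -/
lemma landing_aux (k : ℕ) (hk : 2 ≤ k) :
    ∀ (n : ℕ) (t : Fin n → ℕ), (∀ ℓ, 1 ≤ t ℓ ∧ t ℓ ≤ k) →
      (∏ ℓ : Fin n, (t ℓ : ℤ)) + (∏ ℓ : Fin n, ((k : ℤ) + 1 - (t ℓ : ℤ)))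
        ≤ (k : ℤ) ^ n + 1 := by
  intro n
  induction n with
  | zero => intro t ht; simp
  | succ n ih =>
    intro t ht
    have hk' : (2 : ℤ) ≤ (k : ℤ) := by exact_mod_cast hk
    set P : ℤ := ∏ ℓ : Fin n, ((t ℓ.succ : ℕ) : ℤ) with hP
    set Q : ℤ := ∏ ℓ : Fin n, ((k : ℤ) + 1 - ((t ℓ.succ : ℕ) : ℤ)) with hQ
    have hPQ : P + Q ≤ (k : ℤ) ^ n + 1 := ih (fun ℓ => t ℓ.succ) (fun ℓ => ht ℓ.succ)
    have hP1 : (1 : ℤ) ≤ P := by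
      rw [hP]
      have := Finset.prod_le_prod (s := Finset.univ) (f := fun _ : Fin n => (1 : ℤ))
        (g := fun ℓ => ((t ℓ.succ : ℕ) : ℤ)) (fun _ _ => zero_le_one)
        (fun ℓ _ => by exact_mod_cast (ht ℓ.succ).1)
      simpa using this
    have hQ1 : (1 : ℤ) ≤ Q := by
      rw [hQ]
      have := Finset.prod_le_prod (s := Finset.univ) (f := fun _ : Fin n => (1 : ℤ))
        (g := fun ℓ => (k : ℤ) + 1 - ((t ℓ.succ : ℕ) : ℤ)) (fun _ _ => zero_le_one)
        (fun ℓ _ => by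
          have h2 : ((t ℓ.succ : ℕ) : ℤ) ≤ (k : ℤ) := by exact_mod_cast (ht ℓ.succ).2
          linarith)
      simpa using this
    have ha1 : (1 : ℤ) ≤ (t 0 : ℤ) := by exact_mod_cast (ht 0).1
    have hak : ((t 0 : ℕ) : ℤ) ≤ (k : ℤ) := by exact_mod_cast (ht 0).2
    rw [Fin.prod_univ_succ, Fin.prod_univ_succ]
    have key : (t 0 : ℤ) * P + ((k : ℤ) + 1 - (t 0 : ℤ)) * Q ≤ (k : ℤ) ^ (n + 1) + 1 := by
      rcases le_total P Q with h | h
      · -- max at a = 1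
        have h1 : (t 0 : ℤ) * P + ((k : ℤ) + 1 - (t 0 : ℤ)) * Q ≤ P + (k : ℤ) * Q := by
          nlinarith
        have h2 : P + (k : ℤ) * Q ≤ (k : ℤ) * (P + Q) - ((k : ℤ) - 1) := by nlinarith
        have h3 : (k : ℤ) * (P + Q) ≤ (k : ℤ) * ((k : ℤ) ^ n + 1) := by nlinarith
        calc (t 0 : ℤ) * P + ((k : ℤ) + 1 - (t 0 : ℤ)) * Q ≤ P + (k : ℤ) * Q := h1
          _ ≤ (k : ℤ) * (P + Q) - ((k : ℤ) - 1) := h2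
          _ ≤ (k : ℤ) * ((k : ℤ) ^ n + 1) - ((k : ℤ) - 1) := by linarith
          _ = (k : ℤ) ^ (n + 1) + 1 := by ring
      · have h1 : (t 0 : ℤ) * P + ((k : ℤ) + 1 - (t 0 : ℤ)) * Q ≤ (k : ℤ) * P + Q := by
          nlinarith
        have h2 : (k : ℤ) * P + Q ≤ (k : ℤ) * (P + Q) - ((k : ℤ) - 1) := by nlinarith
        calc (t 0 : ℤ) * P + ((k : ℤ) + 1 - (t 0 : ℤ)) * Q ≤ (k : ℤ) * P + Q := h1
          _ ≤ (k : ℤ) * (P + Q) - ((k : ℤ) - 1) := h2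
          _ ≤ (k : ℤ) * ((k : ℤ) ^ n + 1) - ((k : ℤ) - 1) := by nlinarith
          _ = (k : ℤ) ^ (n + 1) + 1 := by ring
    exact key

/-- For every traversal string `t` of length `n` with values in `{1,…,k}`,
`∏_{ℓ=1}^n t(ℓ) + ∏_{ℓ=1}^n (k + 1 - t(ℓ)) ≤ k^n + 1`, i.e. `A(t) ≤ B(t)`,
so every landing range is a nonempty integer interval. -/
theorem landing_range_nonempty (k n : ℕ) (hk : 2 ≤ k) (hn : 1 ≤ n)
    (t : Fin n → ℕ) (ht : ∀ ℓ, 1 ≤ t ℓ ∧ t ℓ ≤ k) :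
    (∏ ℓ : Fin n, (t ℓ : ℤ)) + (∏ ℓ : Fin n, ((k : ℤ) + 1 - (t ℓ : ℤ)))
      ≤ (k : ℤ) ^ n + 1 := by
  exact landing_aux k hk n t ht
end

section
/- Fix natural numbers k ≥ 2 and n ≥ 1 with k odd. Then for every traversal string t of length n, the length of the landing range of t, namely B(t) − A(t) + 1, is odd. -/
/-- The smallest chip that can land at the vertex with traversal string `t`:
`A(t) = ∏_{ℓ=1}^n t(ℓ)`. -/
def chipA (n : ℕ) (t : Fin n → ℕ) : ℤ := ∏ ℓ : Fin n, (t ℓ : ℤ)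

/-- The largest chip that can land at the vertex with traversal string `t`:
`B(t) = k^n + 1 - ∏_{ℓ=1}^n (k + 1 - t(ℓ))`. -/
def chipB (k n : ℕ) (t : Fin n → ℕ) : ℤ :=
  (k : ℤ) ^ n + 1 - ∏ ℓ : Fin n, ((k : ℤ) + 1 - (t ℓ : ℤ))

/-- For odd `k ≥ 2` (with `n ≥ 1`), the length `B(t) - A(t) + 1` of the
landing range of every traversal string `t` of length `n` is odd. -/
theorem landing_range_length_odd (k n : ℕ) (hk : 2 ≤ k) (hkodd : Odd k) (hn : 1 ≤ n)
    (t : Fin n → ℕ) (ht : ∀ ℓ, 1 ≤ t ℓ ∧ t ℓ ≤ k) :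
    Odd (chipB k n t - chipA n t + 1) := by
  rw [← Int.not_even_iff_odd, even_iff_two_dvd,
    show (2:ℤ) = ((2:ℕ):ℤ) by norm_num, ← ZMod.intCast_zmod_eq_zero_iff_dvd]
  unfold chipB chipA
  push_cast
  obtain ⟨m, hm⟩ := hkodd
  have hz : (2 : ZMod 2) = 0 := by decide
  have hk1 : (k : ZMod 2) = 1 := by subst hm; push_cast; rw [hz]; ring
  rw [hk1]
  have h2 : ((1 : ZMod 2) + 1) = 0 := by decide
  have hP : ∏ ℓ : Fin n, ((1 : ZMod 2) + 1 - (t ℓ : ZMod 2))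
      = ∏ ℓ : Fin n, (t ℓ : ZMod 2) := by
    refine Finset.prod_congr rfl fun ℓ _ => ?_
    rw [h2]
    have : ((0 : ZMod 2) - (t ℓ : ZMod 2)) = -(t ℓ : ZMod 2) := by ring
    rw [this, neg_eq_iff_add_eq_zero]
    have := ZMod.natCast_self 2
    ring_nf
    rw [show ((t ℓ : ZMod 2) * 2) = (t ℓ : ZMod 2) * (2 : ℕ) by push_cast; ring,
      ZMod.natCast_self, mul_zero]
  rw [hP, one_pow]
  intro h
  have : (2 : ZMod 2) * ∏ ℓ : Fin n, (t ℓ : ZMod 2) = 0 := by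
    rw [show ((2 : ZMod 2)) = (2 : ℕ) by norm_num, ZMod.natCast_self, zero_mul]
  have h' : (1 : ZMod 2) = 0 := by linear_combination h + this - hz
  exact one_ne_zero h'
end

section
/- Fix natural numbers k ≥ 2 and n ≥ 1. For every nontrivial traversal string t of length n, the length of its landing range satisfies B(t) − A(t) + 1 ≥ k^{n−1}, and equality holds for the traversal string t₀ with t₀(1) = 2 and t₀(ℓ) = 1 for all ℓ ≥ 2 (when n ≥ 1 and, if n = 1, k ≥ 3 so that t₀ is nontrivial). -/
lemma listProd_ge_one (l : List ℤ) (h : ∀ a ∈ l, 1 ≤ a) : 1 ≤ l.prod := by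
  induction l with
  | nil => simp
  | cons a t ih =>
    simp only [List.prod_cons]
    have ha := h a (by simp)
    have ht := ih (fun b hb => h b (by simp [hb]))
    nlinarith

lemma listProd_ge_two (l : List ℤ) (h : ∀ a ∈ l, 1 ≤ a) (h2 : ∃ a ∈ l, 2 ≤ a) :
    2 ≤ l.prod := by
  induction l with
  | nil => simp at h2
  | cons a t ih =>
    simp only [List.prod_cons]
    have ha := h a (by simp)
    have ht := listProd_ge_one t (fun b hb => h b (by simp [hb]))
    obtain ⟨b, hb, hb2⟩ := h2
    rcases List.mem_cons.mp hb with rfl | hbt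
    · nlinarith
    · have := ih (fun c hc => h c (by simp [hc])) ⟨b, hbt, hb2⟩
      nlinarith

lemma key (k : ℤ) (hk : 2 ≤ k) : ∀ l : List ℤ, (∀ a ∈ l, 1 ≤ a ∧ a ≤ k) →
    (∃ a ∈ l, a ≠ 1) → (∃ a ∈ l, a ≠ k) →
    l.prod + (l.map (fun a => k + 1 - a)).prod ≤ (k - 1) * k ^ (l.length - 1) + 2 := by
  intro l
  induction l with
  | nil => intro _ h1 _; simp at h1
  | cons a rest ih =>
    intro hb h1 h2
    have ha := hb a (by simp)
    rcases eq_or_ne rest [] with rfl | hne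
    · simp only [List.map_cons, List.map_nil, List.prod_cons, List.prod_nil, List.length_cons,
        List.length_nil, Nat.sub_self, pow_zero, mul_one]
      linarith
    · obtain ⟨m, hm⟩ : ∃ m, rest.length = m + 1 := by
        rcases rest with _ | ⟨b, r⟩
        · exact absurd rfl hne
        · exact ⟨r.length, by simp⟩
      have hbr : ∀ a ∈ rest, 1 ≤ a ∧ a ≤ k := fun b hb' => hb b (by simp [hb'])
      have hx1 : 1 ≤ rest.prod := listProd_ge_one rest (fun b hb' => (hbr b hb').1)
      have hy1 : 1 ≤ (rest.map (fun a => k + 1 - a)).prod := by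
        apply listProd_ge_one
        intro c hc
        obtain ⟨b, hb', rfl⟩ := List.mem_map.mp hc
        have := (hbr b hb').2; linarith
      simp only [List.map_cons, List.prod_cons, List.length_cons, Nat.add_sub_cancel, hm]
      by_cases hr1 : ∀ b ∈ rest, b = 1
      · have hx : rest.prod = 1 := List.prod_eq_one (fun b hb' => hr1 b hb')
        have hy : (rest.map (fun a => k + 1 - a)).prod = k ^ (m + 1) := by
          rw [List.prod_eq_pow_card _ k, List.length_map, hm]
          intro c hc
          obtain ⟨b, hb', rfl⟩ := List.mem_map.mp hc
          rw [hr1 b hb']; ring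
        have ha2 : 2 ≤ a := by
          obtain ⟨c, hc, hc1⟩ := h1
          rcases List.mem_cons.mp hc with rfl | hct
          · omega
          · exact absurd (hr1 c hct) hc1
        rw [hx, hy]
        have hp : (1 : ℤ) ≤ k ^ (m + 1) := one_le_pow₀ (by linarith)
        nlinarith
      · by_cases hrk : ∀ b ∈ rest, b = k
        · have hx : rest.prod = k ^ (m + 1) := by
            rw [List.prod_eq_pow_card _ k hrk, hm]
          have hy : (rest.map (fun a => k + 1 - a)).prod = 1 := by
            apply List.prod_eq_one
            intro c hc
            obtain ⟨b, hb', rfl⟩ := List.mem_map.mp hc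
            rw [hrk b hb']; ring
          have hak : a ≤ k - 1 := by
            obtain ⟨c, hc, hck⟩ := h2
            rcases List.mem_cons.mp hc with rfl | hct
            · omega
            · exact absurd (hrk c hct) hck
          rw [hx, hy]
          have hp : (1 : ℤ) ≤ k ^ (m + 1) := one_le_pow₀ (by linarith)
          nlinarith
        · push_neg at hr1 hrk
          obtain ⟨b1, hb1, hb1'⟩ := hr1
          obtain ⟨bk, hbk, hbk'⟩ := hrk
          have hx2 : 2 ≤ rest.prod :=
            listProd_ge_two rest (fun b hb' => (hbr b hb').1)
              ⟨b1, hb1, by have := (hbr b1 hb1).1; omega⟩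
          have hy2 : 2 ≤ (rest.map (fun a => k + 1 - a)).prod := by
            apply listProd_ge_two
            · intro c hc
              obtain ⟨b, hb', rfl⟩ := List.mem_map.mp hc
              have := (hbr b hb').2; linarith
            · refine ⟨k + 1 - bk, List.mem_map.mpr ⟨bk, hbk, rfl⟩, ?_⟩
              have := (hbr bk hbk).2
              omega
          have hIH := ih hbr ⟨b1, hb1, hb1'⟩ ⟨bk, hbk, hbk'⟩
          rw [hm] at hIH
          simp only [Nat.add_sub_cancel] at hIH
          have hpow : (k : ℤ) ^ (m + 1) = k * k ^ m := by ring
          have hIH' : k * (rest.prod + (rest.map (fun a => k + 1 - a)).prod)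
              ≤ k * ((k - 1) * k ^ m + 2) :=
            mul_le_mul_of_nonneg_left hIH (by linarith)
          nlinarith [mul_le_mul_of_nonneg_left hx2 (by linarith : (0:ℤ) ≤ k - a),
            mul_le_mul_of_nonneg_left hy2 (by linarith : (0:ℤ) ≤ a - 1)]

/-- every nontrivial traversal string `t` of length `n` has landing range of
length at least `k^(n-1)`, and equality holds for the string `t₀` with `t₀(1) = 2` and
`t₀(ℓ) = 1` for `ℓ ≥ 2` (assuming, if `n = 1`, that `k ≥ 3` so that `t₀` is nontrivial). -/
theorem shortest_nontrivial_landing_range (k n : ℕ) (hk : 2 ≤ k) (hn : 1 ≤ n) :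
    (∀ t : Fin n → ℕ, (∀ ℓ, 1 ≤ t ℓ ∧ t ℓ ≤ k) →
      ¬ (∀ ℓ, t ℓ = 1) → ¬ (∀ ℓ, t ℓ = k) →
      (k : ℤ) ^ (n - 1) ≤ chipB k n t - chipA n t + 1) ∧
    ((n = 1 → 3 ≤ k) →
      chipB k n (fun ℓ => if (ℓ : ℕ) = 0 then 2 else 1)
        - chipA n (fun ℓ => if (ℓ : ℕ) = 0 then 2 else 1) + 1 = (k : ℤ) ^ (n - 1)) := by
  obtain ⟨m, rfl⟩ : ∃ m, n = m + 1 := ⟨n - 1, by omega⟩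
  have hk' : (2 : ℤ) ≤ (k : ℤ) := by exact_mod_cast hk
  constructor
  · intro t hb h1 h2
    push_neg at h1 h2
    obtain ⟨ℓ1, hℓ1⟩ := h1
    obtain ⟨ℓk, hℓk⟩ := h2
    set l : List ℤ := List.ofFn (fun ℓ => ((t ℓ : ℤ))) with hl
    have hlen : l.length = m + 1 := by simp [hl]
    have hA : chipA (m + 1) t = l.prod := by
      rw [hl, List.prod_ofFn]; rfl
    have hB : (∏ ℓ : Fin (m + 1), ((k : ℤ) + 1 - (t ℓ : ℤ)))
        = (l.map (fun a => (k : ℤ) + 1 - a)).prod := by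
      rw [hl, List.map_ofFn, List.prod_ofFn]; rfl
    have hmem : ∀ a ∈ l, 1 ≤ a ∧ a ≤ (k : ℤ) := by
      intro a ha
      obtain ⟨ℓ, rfl⟩ := List.mem_ofFn.mp ha
      have := hb ℓ
      have h1' : (1 : ℤ) ≤ (t ℓ : ℤ) := by exact_mod_cast this.1
      have h2' : ((t ℓ : ℤ)) ≤ (k : ℤ) := by exact_mod_cast this.2
      exact ⟨h1', h2'⟩
    have he1 : ∃ a ∈ l, a ≠ 1 := by
      refine ⟨(t ℓ1 : ℤ), List.mem_ofFn.mpr ⟨ℓ1, rfl⟩, ?_⟩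
      exact_mod_cast hℓ1
    have he2 : ∃ a ∈ l, a ≠ (k : ℤ) := by
      refine ⟨(t ℓk : ℤ), List.mem_ofFn.mpr ⟨ℓk, rfl⟩, ?_⟩
      exact_mod_cast hℓk
    have hkey := key (k : ℤ) hk' l hmem he1 he2
    rw [hlen] at hkey
    simp only [Nat.add_sub_cancel] at hkey ⊢
    rw [chipB, hB, hA]
    have hpow : (k : ℤ) ^ (m + 1) = k * k ^ m := by ring
    nlinarith
  · intro _
    simp only [Nat.add_sub_cancel]
    rw [chipA, chipB, Fin.prod_univ_succ, Fin.prod_univ_succ]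
    simp [Fin.val_succ]
    ring
end

section
/- Fix natural numbers k ≥ 2 and n ≥ 1. For every traversal string t of length n, the length of its landing range satisfies B(t) − A(t) + 1 ≤ k^n + 2 − k^{⌊n/2⌋} − k^{⌈n/2⌉} (equivalently ∏_{ℓ=1}^n t(ℓ) + ∏_{ℓ=1}^n (k+1−t(ℓ)) ≥ k^{⌊n/2⌋} + k^{⌈n/2⌉}), and equality holds for the traversal string that takes value 1 at the first ⌊n/2⌋ arguments and value k at the remaining ⌈n/2⌉ arguments. -/
open Finset

/-- Auxiliary: product over `Fin n` of an if-then-else on the index. -/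
lemma prod_fin_if (n m : ℕ) (hm : m ≤ n) (a b : ℤ) :
    (∏ ℓ : Fin n, (if (ℓ : ℕ) < m then a else b)) = a ^ m * b ^ (n - m) := by
  rw [Fin.prod_univ_eq_prod_range (fun i => if i < m then a else b) n]
  obtain ⟨r, rfl⟩ : ∃ r, n = m + r := ⟨n - m, by omega⟩
  rw [Finset.prod_range_add]
  have h1 : (∏ i ∈ Finset.range m, (if i < m then a else b)) = a ^ m := by
    rw [Finset.prod_congr rfl fun i hi => if_pos (Finset.mem_range.mp hi)]
    simp
  have h2 : (∏ i ∈ Finset.range r, (if m + i < m then a else b)) = b ^ r := by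
    rw [Finset.prod_congr rfl fun i _ => if_neg (by omega)]
    simp
  rw [h1, h2, Nat.add_sub_cancel_left]

/-- Auxiliary: for `m ≤ n/2`, `k^(n/2) + k^(n-n/2) ≤ k^m + k^(n-m)`. -/
lemma min_pow_aux (k n m : ℕ) (hk : 2 ≤ k) (hm : m ≤ n / 2) :
    (k : ℤ) ^ (n / 2) + (k : ℤ) ^ (n - n / 2) ≤ (k : ℤ) ^ m + (k : ℤ) ^ (n - m) := by
  have h1 : n / 2 = m + (n / 2 - m) := by omega
  have h2 : n - m = (n - n / 2) + (n / 2 - m) := by omega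
  have hk1 : (1 : ℤ) ≤ (k : ℤ) := by exact_mod_cast Nat.one_le_of_lt hk
  have hkc : (k : ℤ) ^ m ≤ (k : ℤ) ^ (n - n / 2) := pow_le_pow_right₀ hk1 (by omega)
  have hke : (1 : ℤ) ≤ (k : ℤ) ^ (n / 2 - m) := by
    calc (1 : ℤ) = 1 ^ (n / 2 - m) := (one_pow _).symm
    _ ≤ (k : ℤ) ^ (n / 2 - m) := pow_le_pow_left₀ one_pos.le hk1 _
  have hx : (k : ℤ) ^ (n / 2) = (k : ℤ) ^ m * (k : ℤ) ^ (n / 2 - m) := by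
    rw [← pow_add, ← h1]
  have hy : (k : ℤ) ^ (n - m) = (k : ℤ) ^ (n - n / 2) * (k : ℤ) ^ (n / 2 - m) := by
    rw [← pow_add, ← h2]
  rw [hx, hy]
  nlinarith [mul_nonneg (sub_nonneg.2 hkc) (sub_nonneg.2 hke)]

/-- Auxiliary: `k^j + k^(n-j)` is minimized at `j = n/2`. -/
lemma min_pow (k n j : ℕ) (hk : 2 ≤ k) (hj : j ≤ n) :
    (k : ℤ) ^ (n / 2) + (k : ℤ) ^ (n - n / 2) ≤ (k : ℤ) ^ j + (k : ℤ) ^ (n - j) := by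
  rcases le_total j (n - j) with h | h
  · exact min_pow_aux k n j hk (by omega)
  · have := min_pow_aux k n (n - j) hk (by omega)
    have hnj : n - (n - j) = j := by omega
    rw [hnj] at this
    linarith

/-- Reduction: any valid traversal string is dominated by a binary one. -/
lemma reduce (k n : ℕ) (hk : 2 ≤ k) :
    ∀ N (t : Fin n → ℕ),
      (Finset.univ.filter fun ℓ => t ℓ ≠ 1 ∧ t ℓ ≠ k).card ≤ N →
      (∀ ℓ, 1 ≤ t ℓ ∧ t ℓ ≤ k) →
      ∃ s : Fin n → ℕ, (∀ ℓ, s ℓ = 1 ∨ s ℓ = k) ∧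
        (∏ ℓ : Fin n, (s ℓ : ℤ)) + (∏ ℓ : Fin n, ((k : ℤ) + 1 - (s ℓ : ℤ)))
          ≤ (∏ ℓ : Fin n, (t ℓ : ℤ)) + (∏ ℓ : Fin n, ((k : ℤ) + 1 - (t ℓ : ℤ))) := by
  intro N
  induction N with
  | zero =>
    intro t hcard ht
    refine ⟨t, fun ℓ => ?_, le_rfl⟩
    by_contra hcon
    push_neg at hcon
    have hmem : ℓ ∈ Finset.univ.filter fun ℓ => t ℓ ≠ 1 ∧ t ℓ ≠ k := by
      simp [hcon.1, hcon.2]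
    have := Finset.card_pos.mpr ⟨ℓ, hmem⟩
    omega
  | succ N ih =>
    intro t hcard ht
    by_cases hall : ∀ ℓ, t ℓ = 1 ∨ t ℓ = k
    · exact ⟨t, hall, le_rfl⟩
    · push_neg at hall
      obtain ⟨ℓ0, h1, hk0⟩ := hall
      set R : ℤ := ∏ ℓ ∈ Finset.univ.erase ℓ0, (t ℓ : ℤ) with hR
      set S : ℤ := ∏ ℓ ∈ Finset.univ.erase ℓ0, ((k : ℤ) + 1 - (t ℓ : ℤ)) with hS
      have hPt : (∏ ℓ : Fin n, (t ℓ : ℤ)) = (t ℓ0 : ℤ) * R :=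
        (Finset.mul_prod_erase _ _ (Finset.mem_univ ℓ0)).symm
      have hQt : (∏ ℓ : Fin n, ((k : ℤ) + 1 - (t ℓ : ℤ))) = ((k : ℤ) + 1 - (t ℓ0 : ℤ)) * S :=
        (Finset.mul_prod_erase _ _ (Finset.mem_univ ℓ0)).symm
      -- update to value v
      have key : ∀ v : ℕ, (v = 1 ∨ v = k) →
          ((v : ℤ) * R + ((k : ℤ) + 1 - (v : ℤ)) * S
            ≤ (∏ ℓ : Fin n, (t ℓ : ℤ)) + (∏ ℓ : Fin n, ((k : ℤ) + 1 - (t ℓ : ℤ)))) →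
          ∃ s : Fin n → ℕ, (∀ ℓ, s ℓ = 1 ∨ s ℓ = k) ∧
            (∏ ℓ : Fin n, (s ℓ : ℤ)) + (∏ ℓ : Fin n, ((k : ℤ) + 1 - (s ℓ : ℤ)))
              ≤ (∏ ℓ : Fin n, (t ℓ : ℤ)) + (∏ ℓ : Fin n, ((k : ℤ) + 1 - (t ℓ : ℤ))) := by
        intro v hv hle
        set u : Fin n → ℕ := Function.update t ℓ0 v with hu
        have huℓ0 : u ℓ0 = v := Function.update_self _ _ _
        have huoff : ∀ ℓ ∈ Finset.univ.erase ℓ0, u ℓ = t ℓ := fun ℓ hℓ =>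
          Function.update_of_ne (Finset.ne_of_mem_erase hℓ) _ _
        have hPu : (∏ ℓ : Fin n, (u ℓ : ℤ)) = (v : ℤ) * R := by
          rw [← Finset.mul_prod_erase _ _ (Finset.mem_univ ℓ0), huℓ0]
          congr 1
          exact Finset.prod_congr rfl fun ℓ hℓ => by rw [huoff ℓ hℓ]
        have hQu : (∏ ℓ : Fin n, ((k : ℤ) + 1 - (u ℓ : ℤ))) = ((k : ℤ) + 1 - (v : ℤ)) * S := by
          rw [← Finset.mul_prod_erase _ _ (Finset.mem_univ ℓ0), huℓ0]
          congr 1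
          exact Finset.prod_congr rfl fun ℓ hℓ => by rw [huoff ℓ hℓ]
        have hsub : (Finset.univ.filter fun ℓ => u ℓ ≠ 1 ∧ u ℓ ≠ k)
            ⊆ (Finset.univ.filter fun ℓ => t ℓ ≠ 1 ∧ t ℓ ≠ k).erase ℓ0 := by
          intro ℓ hℓ
          simp only [Finset.mem_filter, Finset.mem_univ, true_and] at hℓ
          have hne : ℓ ≠ ℓ0 := by
            intro hne; subst hne
            rcases hv with hv | hv <;> rw [huℓ0, hv] at hℓ <;> tauto
          rw [Finset.mem_erase]
          refine ⟨hne, ?_⟩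
          simp only [Finset.mem_filter, Finset.mem_univ, true_and]
          rw [hu] at hℓ
          rwa [Function.update_of_ne hne] at hℓ
        have hmem0 : ℓ0 ∈ Finset.univ.filter fun ℓ => t ℓ ≠ 1 ∧ t ℓ ≠ k := by
          simp [h1, hk0]
        have hcard' : (Finset.univ.filter fun ℓ => u ℓ ≠ 1 ∧ u ℓ ≠ k).card ≤ N := by
          have h3 := Finset.card_le_card hsub
          rw [Finset.card_erase_of_mem hmem0] at h3
          have h4 := Finset.card_pos.mpr ⟨ℓ0, hmem0⟩
          omega
        have hu_valid : ∀ ℓ, 1 ≤ u ℓ ∧ u ℓ ≤ k := by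
          intro ℓ
          by_cases hℓ : ℓ = ℓ0
          · subst hℓ; rw [huℓ0]; rcases hv with hv | hv <;> omega
          · rw [hu, Function.update_of_ne hℓ]; exact ht ℓ
        obtain ⟨s, hs, hsle⟩ := ih u hcard' hu_valid
        exact ⟨s, hs, by rw [hPu, hQu] at hsle; linarith⟩
      have ht0 : (1 : ℤ) ≤ (t ℓ0 : ℤ) := by exact_mod_cast (ht ℓ0).1
      have ht0' : (t ℓ0 : ℤ) ≤ (k : ℤ) := by exact_mod_cast (ht ℓ0).2
      rcases le_total S R with hRS | hRS
      · refine key 1 (Or.inl rfl) ?_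
        rw [hPt, hQt]
        push_cast
        nlinarith [mul_nonneg (sub_nonneg.2 ht0) (sub_nonneg.2 hRS)]
      · refine key k (Or.inr rfl) ?_
        rw [hPt, hQt]
        push_cast
        nlinarith [mul_nonneg (sub_nonneg.2 ht0') (sub_nonneg.2 hRS)]

/-- Evaluation of binary strings. -/
lemma binary_eval (k n : ℕ) (hk : 2 ≤ k) (s : Fin n → ℕ) (hs : ∀ ℓ, s ℓ = 1 ∨ s ℓ = k) :
    ∃ j ≤ n, (∏ ℓ : Fin n, (s ℓ : ℤ)) = (k : ℤ) ^ j ∧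
      (∏ ℓ : Fin n, ((k : ℤ) + 1 - (s ℓ : ℤ))) = (k : ℤ) ^ (n - j) := by
  set F : Finset (Fin n) := Finset.univ.filter fun ℓ => s ℓ = k with hF
  refine ⟨F.card, by simpa using Finset.card_le_card (Finset.subset_univ F), ?_, ?_⟩
  · rw [← Finset.prod_filter_mul_prod_filter_not Finset.univ (fun ℓ => s ℓ = k)]
    have hA : (∏ ℓ ∈ F, (s ℓ : ℤ)) = (k : ℤ) ^ F.card := by
      rw [Finset.prod_congr rfl fun ℓ hℓ => ?_, Finset.prod_const]
      rw [(Finset.mem_filter.mp hℓ).2]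
    have hB : (∏ ℓ ∈ Finset.univ.filter fun ℓ => ¬ s ℓ = k, (s ℓ : ℤ)) = 1 := by
      apply Finset.prod_eq_one
      intro ℓ hℓ
      have := (Finset.mem_filter.mp hℓ).2
      rcases hs ℓ with h | h
      · rw [h]; norm_num
      · exact absurd h this
    rw [hA, hB, mul_one]
  · rw [← Finset.prod_filter_mul_prod_filter_not Finset.univ (fun ℓ => s ℓ = k)]
    have hA : (∏ ℓ ∈ F, ((k : ℤ) + 1 - (s ℓ : ℤ))) = 1 := by
      apply Finset.prod_eq_one
      intro ℓ hℓ
      rw [(Finset.mem_filter.mp hℓ).2]; ring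
    have hB : (∏ ℓ ∈ Finset.univ.filter fun ℓ => ¬ s ℓ = k, ((k : ℤ) + 1 - (s ℓ : ℤ)))
        = (k : ℤ) ^ (n - F.card) := by
      rw [Finset.prod_congr rfl fun ℓ hℓ => ?_, Finset.prod_const]
      · congr 1
        have := Finset.card_filter_add_card_filter_not
          (s := (Finset.univ : Finset (Fin n))) (p := fun ℓ => s ℓ = k)
        simp only [Finset.card_univ, Fintype.card_fin] at this
        have hFc : F.card = (Finset.univ.filter fun ℓ => s ℓ = k).card := by rw [hF]
        omega
      · have h2 := (Finset.mem_filter.mp hℓ).2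
        rcases hs ℓ with h | h
        · rw [h]; ring
        · exact absurd h h2
    rw [hA, hB, one_mul]

/-- every traversal string `t` of length `n` has landing range of length at most
`k^n + 2 - k^⌊n/2⌋ - k^⌈n/2⌉`, and equality holds for the string taking value `1` at the
first `⌊n/2⌋` arguments and value `k` at the remaining `⌈n/2⌉` arguments.
(Here `⌊n/2⌋ = n / 2` and `⌈n/2⌉ = n - n / 2`.) -/
theorem longest_landing_range (k n : ℕ) (hk : 2 ≤ k) (hn : 1 ≤ n) :
    (∀ t : Fin n → ℕ, (∀ ℓ, 1 ≤ t ℓ ∧ t ℓ ≤ k) →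
      chipB k n t - chipA n t + 1
        ≤ (k : ℤ) ^ n + 2 - (k : ℤ) ^ (n / 2) - (k : ℤ) ^ (n - n / 2)) ∧
    chipB k n (fun ℓ => if (ℓ : ℕ) < n / 2 then 1 else k)
        - chipA n (fun ℓ => if (ℓ : ℕ) < n / 2 then 1 else k) + 1
      = (k : ℤ) ^ n + 2 - (k : ℤ) ^ (n / 2) - (k : ℤ) ^ (n - n / 2) := by
  constructor
  · intro t ht
    obtain ⟨s, hs, hle⟩ := reduce k n hk _ t le_rfl ht
    obtain ⟨j, hj, hA, hB⟩ := binary_eval k n hk s hs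
    have hmin := min_pow k n j hk hj
    rw [hA, hB] at hle
    unfold chipA chipB
    linarith
  · have hm : n / 2 ≤ n := Nat.div_le_self n 2
    have hA : chipA n (fun ℓ => if (ℓ : ℕ) < n / 2 then 1 else k) = (k : ℤ) ^ (n - n / 2) := by
      unfold chipA
      have : ∀ ℓ : Fin n, (((if (ℓ : ℕ) < n / 2 then 1 else k : ℕ)) : ℤ)
          = (if (ℓ : ℕ) < n / 2 then (1 : ℤ) else (k : ℤ)) := by
        intro ℓ; split <;> simp
      rw [Finset.prod_congr rfl fun ℓ _ => this ℓ, prod_fin_if n (n / 2) hm]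
      simp
    have hB : (∏ ℓ : Fin n, ((k : ℤ) + 1 - (((if (ℓ : ℕ) < n / 2 then 1 else k : ℕ)) : ℤ)))
        = (k : ℤ) ^ (n / 2) := by
      have : ∀ ℓ : Fin n, ((k : ℤ) + 1 - (((if (ℓ : ℕ) < n / 2 then 1 else k : ℕ)) : ℤ))
          = (if (ℓ : ℕ) < n / 2 then (k : ℤ) else (1 : ℤ)) := by
        intro ℓ; split <;> push_cast <;> ring
      rw [Finset.prod_congr rfl fun ℓ _ => this ℓ, prod_fin_if n (n / 2) hm]
      simp
    unfold chipB
    rw [hA, hB]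
    ring
end

section
/- Fix natural numbers k ≥ 2, n ≥ 1 and an integer c with 2 ≤ c ≤ k^n − 1. Set m = ⌊log_k c⌋ and y = ⌊c / k^m⌋, and let t* be the traversal string of length n with t*(ℓ) = k for 1 ≤ ℓ ≤ m, t*(m+1) = y, and t*(ℓ) = 1 for ℓ > m + 1. Then A(t*) ≤ c ≤ B(t*), and every traversal string t′ of length n that is lexicographically greater than t* satisfies A(t′) > c. In other words, t* is the lexicographically greatest traversal string whose landing range contains c. -/
/-- Lexicographic order on traversal strings. -/
def lexLt {n : ℕ} (a b : Fin n → ℕ) : Prop :=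
  ∃ ℓ : Fin n, (∀ m : Fin n, m < ℓ → a m = b m) ∧ a ℓ < b ℓ

/-- Product of a three-block step function over `range n`. -/
lemma prod_three (n m : ℕ) (hmn : m < n) (a b c : ℤ) :
    (∏ i ∈ Finset.range n, (if i < m then a else if i = m then b else c))
      = a ^ m * b * c ^ (n - m - 1) := by
  rw [← Finset.prod_range_mul_prod_Ico _ (Nat.succ_le_of_lt hmn)]
  have h1 : (∏ i ∈ Finset.range (m + 1),
      (if i < m then a else if i = m then b else c)) = a ^ m * b := by
    rw [Finset.prod_range_succ]
    have : (∏ i ∈ Finset.range m, (if i < m then a else if i = m then b else c))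
        = a ^ m := by
      rw [Finset.prod_congr rfl (fun i hi => by
        rw [if_pos (Finset.mem_range.mp hi)]), Finset.prod_const, Finset.card_range]
    rw [this, if_neg (lt_irrefl m), if_pos rfl]
  have h2 : (∏ i ∈ Finset.Ico (m + 1) n,
      (if i < m then a else if i = m then b else c)) = c ^ (n - m - 1) := by
    rw [Finset.prod_congr rfl (fun i hi => by
      have := (Finset.mem_Ico.mp hi).1
      rw [if_neg (by omega), if_neg (by omega)]), Finset.prod_const, Nat.card_Ico]
    congr 1
  rw [h1, h2]

/-- with `m = ⌊log_k c⌋`, `y = ⌊c / k^m⌋`, the string `t*` consisting of `m`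
copies of `k`, then `y`, then all `1`s, is the lexicographically greatest traversal string
whose landing range contains `c`: `A(t*) ≤ c ≤ B(t*)`, and any valid string lexicographically
greater than `t*` has `A(t') > c`. -/
theorem rightmost_vertex_for_chip (k n c : ℕ) (hk : 2 ≤ k) (hn : 1 ≤ n)
    (hc1 : 2 ≤ c) (hc2 : c ≤ k ^ n - 1) :
    let m := Nat.log k c
    let y := c / k ^ m
    let tstar : Fin n → ℕ := fun ℓ =>
      if (ℓ : ℕ) < m then k else if (ℓ : ℕ) = m then y else 1
    (chipA n tstar ≤ (c : ℤ) ∧ (c : ℤ) ≤ chipB k n tstar) ∧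
      ∀ t' : Fin n → ℕ, (∀ ℓ, 1 ≤ t' ℓ ∧ t' ℓ ≤ k) →
        lexLt tstar t' → (c : ℤ) < chipA n t' := by
  intro m y tstar
  have hc0 : c ≠ 0 := by omega
  have hkpos : 0 < k := by omega
  have hpm : 0 < k ^ m := Nat.pow_pos hkpos
  have hmle : k ^ m ≤ c := Nat.pow_log_le_self k hc0
  have hmlt : c < k ^ (m + 1) := Nat.lt_pow_succ_log_self (by omega) c
  have hmn : m < n := by
    have hcn : c < k ^ n := by
      have : 1 ≤ k ^ n := Nat.one_le_pow n k hkpos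
      omega
    exact (Nat.log_lt_iff_lt_pow (by omega) hc0).mpr hcn
  have hy1 : 1 ≤ y := (Nat.one_le_div_iff hpm).mpr hmle
  have hyk : y < k := by
    have : c < k * k ^ m := by
      have : k ^ (m + 1) = k * k ^ m := by ring
      omega
    exact Nat.div_lt_iff_lt_mul hpm |>.mpr (by omega)
  have hA : y * k ^ m ≤ c := Nat.div_mul_le_self c (k ^ m)
  have hC : c < (y + 1) * k ^ m := by
    have h1 := Nat.div_add_mod c (k ^ m)
    have h2 := Nat.mod_lt c hpm
    show c < (c / k ^ m + 1) * k ^ m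
    nlinarith
  -- products for tstar
  have htstar : ∀ i : Fin n,
      tstar i = if (i : ℕ) < m then k else if (i : ℕ) = m then y else 1 := fun i => rfl
  have hAeq : chipA n tstar = (k : ℤ) ^ m * (y : ℤ) := by
    unfold chipA
    have : ∀ i : Fin n, ((tstar i : ℤ))
        = (fun j : ℕ => if j < m then (k : ℤ) else if j = m then (y : ℤ) else 1) (i : ℕ) := by
      intro i; rw [htstar i]; dsimp only; split_ifs <;> simp
    rw [Finset.prod_congr rfl (fun i _ => this i),
      Fin.prod_univ_eq_prod_range (fun j => if j < m then (k : ℤ) else if j = m then (y : ℤ) else 1) n,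
      prod_three n m hmn, one_pow, mul_one]
  have hBeq : (∏ ℓ : Fin n, ((k : ℤ) + 1 - (tstar ℓ : ℤ)))
      = ((k : ℤ) + 1 - (y : ℤ)) * (k : ℤ) ^ (n - m - 1) := by
    have : ∀ i : Fin n, ((k : ℤ) + 1 - (tstar i : ℤ))
        = (fun j : ℕ => if j < m then (1 : ℤ) else if j = m then ((k : ℤ) + 1 - (y : ℤ)) else (k : ℤ)) (i : ℕ) := by
      intro i; rw [htstar i]; dsimp only; split_ifs <;> push_cast <;> ring
    rw [Finset.prod_congr rfl (fun i _ => this i),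
      Fin.prod_univ_eq_prod_range
        (fun j => if j < m then (1 : ℤ) else if j = m then ((k : ℤ) + 1 - (y : ℤ)) else (k : ℤ)) n,
      prod_three n m hmn, one_pow, one_mul]
  have hCZ : (c : ℤ) + 1 ≤ ((y : ℤ) + 1) * (k : ℤ) ^ m := by
    have h : ((c : ℕ) : ℤ) < (((y + 1) * k ^ m : ℕ) : ℤ) := by exact_mod_cast hC
    push_cast at h; omega
  have hAZ : (y : ℤ) * (k : ℤ) ^ m ≤ (c : ℤ) := by
    have h : (((y * k ^ m : ℕ)) : ℤ) ≤ ((c : ℕ) : ℤ) := by exact_mod_cast hA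
    push_cast at h; omega
  -- integer abbreviations
  set P : ℤ := (k : ℤ) ^ m with hP
  set Aa : ℤ := (k : ℤ) ^ (n - m - 1) with hAa
  have hP1 : 1 ≤ P := one_le_pow₀ (by exact_mod_cast hkpos)
  have hAa1 : 1 ≤ Aa := one_le_pow₀ (by exact_mod_cast hkpos)
  have hY1 : (1 : ℤ) ≤ (y : ℤ) := by exact_mod_cast hy1
  have hYk : (y : ℤ) ≤ (k : ℤ) - 1 := by
    have : (y : ℤ) < (k : ℤ) := by exact_mod_cast hyk
    omega
  have hk2 : (2 : ℤ) ≤ (k : ℤ) := by exact_mod_cast hk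
  have hpow : (k : ℤ) ^ n = P * (k : ℤ) * Aa := by
    rw [hP, hAa, ← pow_succ, ← pow_add]
    congr 1; omega
  clear_value m y tstar
  constructor
  · constructor
    · rw [hAeq]; linarith [hAZ, mul_comm ((y : ℤ)) P]
    · unfold chipB
      rw [hBeq, hpow]
      rcases le_total P Aa with h | h
      · have hkA : (2 : ℤ) ≤ (k : ℤ) * Aa := by
          calc (2 : ℤ) ≤ 2 * Aa := by linarith
          _ ≤ (k : ℤ) * Aa := mul_le_mul_of_nonneg_right (by linarith) (by linarith)
        have h1 : (0 : ℤ) ≤ (P - 1) * ((k : ℤ) * Aa - 2) :=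
          mul_nonneg (by linarith) (by linarith)
        have h2 : (0 : ℤ) ≤ ((y : ℤ) - 1) * (Aa - P) :=
          mul_nonneg (by linarith) (by linarith)
        linarith [h1, h2]
      · have hkP : (2 : ℤ) ≤ (k : ℤ) * P := by
          calc (2 : ℤ) ≤ 2 * P := by linarith
          _ ≤ (k : ℤ) * P := mul_le_mul_of_nonneg_right (by linarith) (by linarith)
        have h1 : (0 : ℤ) ≤ (Aa - 1) * ((k : ℤ) * P - 2) :=
          mul_nonneg (by linarith) (by linarith)
        have h2 : (0 : ℤ) ≤ ((k : ℤ) - 1 - (y : ℤ)) * (P - Aa) :=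
          mul_nonneg (by linarith) (by linarith)
        linarith [h1, h2]
  · rintro t' ht' ⟨ℓ0, hagree, hlt⟩
    rcases lt_trichotomy (ℓ0 : ℕ) m with hcase | hcase | hcase
    · -- impossible: tstar ℓ0 = k
      exfalso
      have : tstar ℓ0 = k := by rw [htstar ℓ0, if_pos hcase]
      have := (ht' ℓ0).2
      omega
    · -- ℓ0.val = m : t' ℓ0 ≥ y + 1
      have hts : tstar ℓ0 = y := by rw [htstar ℓ0, if_neg (by omega), if_pos hcase]
      set L : Fin n → ℤ := fun i =>
        if (i : ℕ) < m then (k : ℤ) else if (i : ℕ) = m then (y : ℤ) + 1 else 1 with hL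
      have hLprod : (∏ i : Fin n, L i) = P * ((y : ℤ) + 1) := by
        rw [hL, Fin.prod_univ_eq_prod_range
          (fun j => if j < m then (k : ℤ) else if j = m then (y : ℤ) + 1 else 1) n,
          prod_three n m hmn, one_pow, mul_one]
      have hle : (∏ i : Fin n, L i) ≤ chipA n t' := by
        unfold chipA
        apply Finset.prod_le_prod
        · intro i _; rw [hL]; dsimp only; split_ifs <;> positivity
        · intro i _
          rw [hL]; dsimp only
          rcases lt_trichotomy (i : ℕ) m with h | h | h
          · rw [if_pos h]
            have : tstar i = t' i := hagree i (by rw [Fin.lt_def]; omega)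
            rw [← this, htstar i, if_pos h]
          · rw [if_neg (by omega), if_pos h]
            have hieq : i = ℓ0 := Fin.ext (by omega)
            have : y < t' i := by rw [hieq]; omega
            exact_mod_cast this
          · rw [if_neg (by omega), if_neg (by omega)]
            exact_mod_cast (ht' i).1
      have : (c : ℤ) < P * ((y : ℤ) + 1) := by linarith
      linarith [hLprod ▸ hle]
    · -- ℓ0.val > m : t' ℓ0 ≥ 2
      have hts : tstar ℓ0 = 1 := by rw [htstar ℓ0, if_neg (by omega), if_neg (by omega)]
      set L : Fin n → ℤ := fun i => (tstar i : ℤ) * (if i = ℓ0 then 2 else 1) with hL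
      have hLprod : (∏ i : Fin n, L i) = P * (y : ℤ) * 2 := by
        rw [hL]
        rw [Finset.prod_mul_distrib]
        have h2 : (∏ i : Fin n, (if i = ℓ0 then (2 : ℤ) else 1)) = 2 :=
          Fintype.prod_ite_eq' ℓ0 (fun _ => (2 : ℤ))
        rw [h2, ← chipA, hAeq]
      have hle : (∏ i : Fin n, L i) ≤ chipA n t' := by
        unfold chipA
        apply Finset.prod_le_prod
        · intro i _; rw [hL]; dsimp only
          have h0 : (0 : ℤ) ≤ (tstar i : ℤ) := Int.natCast_nonneg _
          split_ifs <;> linarith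
        · intro i _
          rw [hL]; dsimp only
          rcases lt_trichotomy i ℓ0 with h | h | h
          · rw [if_neg (ne_of_lt h), mul_one]
            exact_mod_cast (hagree i h).le
          · rw [if_pos h, h, hts]
            have : 2 ≤ t' ℓ0 := by omega
            push_cast; exact_mod_cast this
          · rw [if_neg (ne_of_gt h), mul_one]
            have : tstar i = 1 := by
              rw [htstar i, if_neg (by rw [Fin.lt_def] at h; omega),
                if_neg (by rw [Fin.lt_def] at h; omega)]
            rw [this]
            exact_mod_cast (ht' i).1
      have : (c : ℤ) < P * (y : ℤ) * 2 := by
        have h1 : (0 : ℤ) ≤ ((y : ℤ) - 1) * P := mul_nonneg (by linarith) (by linarith)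
        linarith [h1]
      linarith [hLprod ▸ hle]
end

section
/- Fix natural numbers k ≥ 2, n ≥ 1 and an integer c with 2 ≤ c ≤ k^n − 1. Set m = ⌊log_k c⌋, y = ⌊c / k^m⌋, j = ⌊log_k (k^n + 1 − c)⌋, and x = k + 1 − ⌊(k^n + 1 − c) / k^j⌋. Then the minimum of idx(t) over t ∈ S(c) equals x·k^{n−1−j}, the maximum of idx(t) over t ∈ S(c) equals 1 + (y − 1)·k^{n−m−1} + k^n − k^{n−m}, and consequently the spread of c equals 2 + (y − 1)·k^{n−m−1} + k^n − k^{n−m} − x·k^{n−1−j}. -/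
/-- The index of a traversal string: the position from the left of the corresponding
vertex in layer `n+1`, namely `1 + ∑_{ℓ=1}^n (t(ℓ) - 1)·k^(n-ℓ)`. -/
def idx (k n : ℕ) (t : Fin n → ℕ) : ℕ :=
  1 + ∑ ℓ : Fin n, (t ℓ - 1) * k ^ (n - 1 - (ℓ : ℕ))

/-- The set of traversal strings of vertices where chip `c` can land. -/
def landSet (k n c : ℕ) : Set (Fin n → ℕ) :=
  {t | (∀ ℓ, 1 ≤ t ℓ ∧ t ℓ ≤ k) ∧ chipA n t ≤ (c : ℤ) ∧ (c : ℤ) ≤ chipB k n t}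


lemma geo' (k : ℕ) (hk : 1 ≤ k) : ∀ n : ℕ,
    (∑ ℓ : Fin n, (k - 1) * k ^ (n - 1 - (ℓ : ℕ))) + 1 = k ^ n := by
  intro n
  induction n with
  | zero => simp
  | succ n ih =>
    rw [Fin.sum_univ_succ]
    have h1 : ∀ i : Fin n, (k - 1) * k ^ (n + 1 - 1 - ((i.succ : Fin (n+1)) : ℕ))
        = (k - 1) * k ^ (n - 1 - (i : ℕ)) := by
      intro i; congr 2; simp [Fin.val_succ]; omega
    rw [Finset.sum_congr rfl (fun i _ => h1 i)]
    simp only [Fin.val_zero, Nat.sub_zero]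
    have h2 : k ^ (n+1) = (k-1) * k^n + k^n := by
      have : (k - 1) * k ^ n + k ^ n = ((k-1)+1) * k^n := by ring
      rw [this]; have : k - 1 + 1 = k := by omega
      rw [this, pow_succ, mul_comm]
    have h3 : n + 1 - 1 = n := by omega
    rw [h3]
    omega

lemma sum_le' (k n : ℕ) (hk : 1 ≤ k) (u : Fin n → ℕ) (hu : ∀ ℓ, u ℓ ≤ k) :
    (∑ ℓ : Fin n, (u ℓ - 1) * k ^ (n - 1 - (ℓ : ℕ))) + 1 ≤ k ^ n := by
  rw [← geo' k hk n]
  have : ∀ i : Fin n, (u i - 1) * k ^ (n - 1 - (i:ℕ)) ≤ (k - 1) * k ^ (n - 1 - (i:ℕ)) :=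
    fun i => Nat.mul_le_mul_right _ (by have := hu i; omega)
  have := Finset.sum_le_sum (fun i (_ : i ∈ Finset.univ) => this i)
  omega

lemma key_s11 (k : ℕ) (hk : 2 ≤ k) :
    ∀ n e z : ℕ, e < n → 1 ≤ z → z < k →
    ∀ u : Fin n → ℕ, (∀ ℓ, 1 ≤ u ℓ ∧ u ℓ ≤ k) →
    k ^ n + (z - 1) * k ^ (n - 1 - e) + 1 ≤
      (∑ ℓ : Fin n, (u ℓ - 1) * k ^ (n - 1 - (ℓ : ℕ))) + k ^ (n - e) →
    (z + 1) * k ^ e ≤ ∏ ℓ : Fin n, u ℓ := by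
  intro n
  induction n with
  | zero => intro e z he; omega
  | succ n ih =>
    intro e z he hz1 hz2 u hu hsum
    have hk1 : 1 ≤ k := by omega
    have hK : 1 ≤ k ^ n := Nat.one_le_pow _ _ (by omega)
    -- split the sum
    have hss : ∑ ℓ : Fin (n+1), (u ℓ - 1) * k ^ (n + 1 - 1 - (ℓ:ℕ))
        = (u 0 - 1) * k ^ n + ∑ ℓ : Fin n, (u ℓ.succ - 1) * k ^ (n - 1 - (ℓ:ℕ)) := by
      have htail : ∑ i : Fin n, (u i.succ - 1) * k ^ (n + 1 - 1 - ((i.succ : Fin (n+1)) : ℕ))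
          = ∑ ℓ : Fin n, (u ℓ.succ - 1) * k ^ (n - 1 - (ℓ:ℕ)) :=
        Finset.sum_congr rfl (fun i _ => by congr 2; simp [Fin.val_succ]; omega)
      rw [Fin.sum_univ_succ, htail]
      simp
    have hps : ∏ ℓ : Fin (n+1), u ℓ = u 0 * ∏ ℓ : Fin n, u ℓ.succ := Fin.prod_univ_succ u
    set S := ∑ ℓ : Fin n, (u ℓ.succ - 1) * k ^ (n - 1 - (ℓ:ℕ)) with hS
    have hSle : S + 1 ≤ k ^ n := sum_le' k n hk1 _ (fun ℓ => (hu ℓ.succ).2)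
    have hPtail : 1 ≤ ∏ ℓ : Fin n, u ℓ.succ :=
      Finset.one_le_prod' (fun i _ => (hu i.succ).1)
    have ha1 : 1 ≤ u 0 := (hu 0).1
    have ha2 : u 0 ≤ k := (hu 0).2
    rw [hss] at hsum
    rw [hps]
    have hpow : k ^ (n+1) = k * k ^ n := by rw [pow_succ, mul_comm]
    match e with
    | 0 =>
      -- hsum : k^(n+1) + (z-1)*k^n + 1 ≤ (u 0 - 1)*k^n + S + k^(n+1)
      simp only [Nat.sub_zero, Nat.add_sub_cancel] at hsum
      rw [hpow] at hsum
      have hmul : ∀ a b : ℕ, a ≤ b → a * k ^ n ≤ b * k ^ n :=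
        fun a b h => Nat.mul_le_mul_right _ h
      -- derive z ≤ u 0
      have hzle : z ≤ u 0 := by
        by_contra hcon
        push_neg at hcon
        have : (u 0 - 1) * k ^ n + k ^ n ≤ (z - 1) * k ^ n := by
          have : (u 0 - 1) + 1 ≤ z - 1 := by omega
          calc (u 0 - 1) * k ^ n + k ^ n = ((u 0 - 1) + 1) * k ^ n := by ring
            _ ≤ (z-1) * k ^ n := hmul _ _ this
        omega
      rcases Nat.lt_or_ge (u 0) (z + 1) with h | h
      · -- u 0 = z, so some tail digit ≥ 2
        have hu0 : u 0 = z := by omega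
        rw [hu0] at hsum
        have hS1 : 1 ≤ S := by omega
        have htl : ∃ i : Fin n, 2 ≤ u i.succ := by
          by_contra hco
          push_neg at hco
          have : S = 0 := Finset.sum_eq_zero (fun i _ => by
            have := hco i; have h1 : u i.succ - 1 = 0 := by omega
            rw [h1, Nat.zero_mul])
          omega
        obtain ⟨i, hi⟩ := htl
        have h2 : u i.succ ≤ ∏ ℓ : Fin n, u ℓ.succ :=
          Finset.single_le_prod' (fun i _ => (hu i.succ).1) (Finset.mem_univ i)
        have : 2 ≤ ∏ ℓ : Fin n, u ℓ.succ := le_trans hi h2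
        calc (z+1) * k ^ 0 = z + 1 := by ring
          _ ≤ z * 2 := by omega
          _ ≤ u 0 * ∏ ℓ : Fin n, u ℓ.succ := by
              rw [hu0]; exact Nat.mul_le_mul_left _ this
      · calc (z+1) * k ^ 0 = (z+1) * 1 := by ring
          _ ≤ u 0 * ∏ ℓ : Fin n, u ℓ.succ := Nat.mul_le_mul h hPtail
    | e' + 1 =>
      have he' : e' < n := by omega
      -- rewrite exponents
      have hx1 : n + 1 - 1 - (e' + 1) = n - 1 - e' := by omega
      have hx2 : n + 1 - (e' + 1) = n - e' := by omega
      rw [hx1, hx2, hpow] at hsum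
      have hBle : k ^ (n - e') ≤ k ^ n := Nat.pow_le_pow_right hk1 (by omega)
      -- show u 0 = k
      have hu0 : u 0 = k := by
        by_contra hcon
        have hle : u 0 - 1 ≤ k - 2 := by omega
        have h1 : (u 0 - 1) * k ^ n ≤ (k - 2) * k ^ n := Nat.mul_le_mul_right _ hle
        have h2 : k * k ^ n = (k - 2) * k ^ n + k ^ n + k ^ n := by
          have : k = (k - 2) + 1 + 1 := by omega
          calc k * k ^ n = ((k-2)+1+1) * k ^ n := by rw [← this]
            _ = (k - 2) * k ^ n + k ^ n + k ^ n := by ring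
        omega
      rw [hu0] at hsum hps ⊢
      have h2 : k * k ^ n = (k - 1) * k ^ n + k ^ n := by
        have : k = (k - 1) + 1 := by omega
        calc k * k ^ n = ((k-1)+1) * k ^ n := by rw [← this]
          _ = (k - 1) * k ^ n + k ^ n := by ring
      have h3 : (k - 1) * k ^ n = (k-1) * k ^ n := rfl
      -- derive IH hypothesis
      have hih : k ^ n + (z - 1) * k ^ (n - 1 - e') + 1 ≤ S + k ^ (n - e') := by omega
      have := ih e' z he' hz1 hz2 (fun ℓ => u ℓ.succ) (fun ℓ => hu ℓ.succ) hih
      calc (z + 1) * k ^ (e' + 1) = k * ((z+1) * k ^ e') := by ring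
        _ ≤ k * ∏ ℓ : Fin n, u ℓ.succ := Nat.mul_le_mul_left _ this

/-- Greedy witness string: `k` for the first `e` positions, `z` at position `e`, `1` after. -/
def W (k e z : ℕ) {n : ℕ} : Fin n → ℕ :=
  fun ℓ => if (ℓ : ℕ) < e then k else if (ℓ : ℕ) = e then z else 1

lemma W_bounds (k e z : ℕ) {n : ℕ} (hk : 1 ≤ k) (hz1 : 1 ≤ z) (hz2 : z ≤ k) :
    ∀ ℓ : Fin n, 1 ≤ W k e z ℓ ∧ W k e z ℓ ≤ k := by
  intro ℓ; unfold W; split_ifs <;> omega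

lemma W_tail_zero (k z : ℕ) {n : ℕ} (i : Fin n) : W k 0 z (i.succ) = 1 := by
  unfold W; simp [Fin.val_succ]

lemma W_tail_succ (k e z : ℕ) {n : ℕ} (i : Fin n) :
    W k (e+1) z (i.succ) = W k e z i := by
  unfold W; simp only [Fin.val_succ]
  split_ifs with h1 h2 h3 h4 h5 <;> first | rfl | omega

lemma W_zero_head (k e z : ℕ) {n : ℕ} :
    W k e z (0 : Fin (n+1)) = if 0 < e then k else z := by
  unfold W; rcases Nat.eq_zero_or_pos e with h | h <;> simp [h]

lemma W_prod (k : ℕ) (hk : 1 ≤ k) :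
    ∀ n e z : ℕ, e < n → (∏ ℓ : Fin n, W k e z ℓ) = z * k ^ e := by
  intro n
  induction n with
  | zero => intro e z he; omega
  | succ n ih =>
    intro e z he
    rw [Fin.prod_univ_succ]
    match e with
    | 0 =>
      have : ∀ i : Fin n, W k 0 z (i.succ) = 1 := W_tail_zero k z
      rw [Finset.prod_congr rfl (fun i _ => this i)]
      simp [W_zero_head]
    | e' + 1 =>
      have : ∀ i : Fin n, W k (e'+1) z (i.succ) = W k e' z i := W_tail_succ k e' z
      rw [Finset.prod_congr rfl (fun i _ => this i), ih e' z (by omega)]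
      rw [W_zero_head]
      simp only [Nat.succ_pos, if_pos]
      ring

lemma W_prodC (k : ℕ) (hk : 1 ≤ k) :
    ∀ n e z : ℕ, e < n → z ≤ k →
    (∏ ℓ : Fin n, (k + 1 - W k e z ℓ)) = (k + 1 - z) * k ^ (n - 1 - e) := by
  intro n
  induction n with
  | zero => intro e z he; omega
  | succ n ih =>
    intro e z he hzk
    rw [Fin.prod_univ_succ]
    match e with
    | 0 =>
      have : ∀ i : Fin n, k + 1 - W k 0 z (i.succ) = k := by
        intro i; rw [W_tail_zero]; omega
      rw [Finset.prod_congr rfl (fun i _ => this i), W_zero_head]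
      have h0 : (if 0 < 0 then k else z) = z := by simp
      rw [h0, Finset.prod_const]
      simp only [Finset.card_univ, Fintype.card_fin]
      have h1 : n + 1 - 1 - 0 = n := by omega
      rw [h1]
    | e' + 1 =>
      have : ∀ i : Fin n, k + 1 - W k (e'+1) z (i.succ) = k + 1 - W k e' z i := by
        intro i; rw [W_tail_succ]
      rw [Finset.prod_congr rfl (fun i _ => this i), ih e' z (by omega) hzk]
      rw [W_zero_head]
      simp only [Nat.succ_pos, if_pos]
      have h1 : k + 1 - k = 1 := by omega
      have h2 : n + 1 - 1 - (e' + 1) = n - 1 - e' := by omega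
      rw [h1, h2]; ring

lemma W_sum (k : ℕ) (hk : 1 ≤ k) :
    ∀ n e z : ℕ, e < n → 1 ≤ z → z ≤ k →
    (∑ ℓ : Fin n, (W k e z ℓ - 1) * k ^ (n - 1 - (ℓ:ℕ))) + k ^ (n - e)
      = k ^ n + (z - 1) * k ^ (n - 1 - e) := by
  intro n
  induction n with
  | zero => intro e z he; omega
  | succ n ih =>
    intro e z he hz1 hz2
    have hss : ∀ u : Fin (n+1) → ℕ, ∑ ℓ : Fin (n+1), (u ℓ - 1) * k ^ (n + 1 - 1 - (ℓ:ℕ))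
        = (u 0 - 1) * k ^ n + ∑ ℓ : Fin n, (u ℓ.succ - 1) * k ^ (n - 1 - (ℓ:ℕ)) := by
      intro u
      have htail : ∑ i : Fin n, (u i.succ - 1) * k ^ (n + 1 - 1 - ((i.succ : Fin (n+1)) : ℕ))
          = ∑ ℓ : Fin n, (u ℓ.succ - 1) * k ^ (n - 1 - (ℓ:ℕ)) :=
        Finset.sum_congr rfl (fun i _ => by congr 2; simp [Fin.val_succ]; omega)
      rw [Fin.sum_univ_succ, htail]
      simp
    rw [hss]
    match e with
    | 0 =>
      have htl : ∀ i : Fin n, (W k 0 z (i.succ) - 1) * k ^ (n - 1 - (i:ℕ)) = 0 := by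
        intro i; rw [W_tail_zero]; simp
      rw [Finset.sum_congr rfl (fun i _ => htl i)]
      rw [W_zero_head]
      simp only [lt_irrefl, if_neg (lt_irrefl 0)]
      simp
      omega
    | e' + 1 =>
      have htl : ∀ i : Fin n, (W k (e'+1) z (i.succ) - 1) * k ^ (n - 1 - (i:ℕ))
          = (W k e' z i - 1) * k ^ (n - 1 - (i:ℕ)) := by
        intro i; rw [W_tail_succ]
      rw [Finset.sum_congr rfl (fun i _ => htl i)]
      rw [W_zero_head]
      simp only [Nat.succ_pos, if_pos]
      have h2 : n + 1 - 1 - (e' + 1) = n - 1 - e' := by omega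
      have h3 : n + 1 - (e' + 1) = n - e' := by omega
      rw [h2, h3]
      have := ih e' z (by omega) hz1 hz2
      have hpow : k ^ (n+1) = (k - 1) * k ^ n + k ^ n := by
        have h4 : k = (k - 1) + 1 := by omega
        calc k ^ (n+1) = k * k ^ n := by rw [pow_succ, mul_comm]
          _ = ((k-1)+1) * k ^ n := by rw [← h4]
          _ = (k - 1) * k ^ n + k ^ n := by ring
      omega

lemma symm_ineq (k z A B : ℕ) (hk : 2 ≤ k) (hz1 : 1 ≤ z) (hz2 : z < k)
    (hA : 1 ≤ A) (hB : 1 ≤ B) : (z + 1) * A + (k + 1 - z) * B ≤ k * A * B + 2 := by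
  have hw : k + 1 - z = (k + 1) - z := rfl
  zify [show z ≤ k + 1 by omega]
  nlinarith [mul_nonneg (mul_nonneg (by omega : (0:ℤ) ≤ (z:ℤ) - 1) (by omega : (0:ℤ) ≤ (A:ℤ)))
      (by omega : (0:ℤ) ≤ (B:ℤ) - 1),
    mul_nonneg (by nlinarith [hB] : (0:ℤ) ≤ ((k:ℤ) + 1 - z) * B - 2)
      (by omega : (0:ℤ) ≤ (A:ℤ) - 1)]

lemma refl_sum (k n : ℕ) (hk : 1 ≤ k) (t : Fin n → ℕ) (ht : ∀ ℓ, 1 ≤ t ℓ ∧ t ℓ ≤ k) :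
    (∑ ℓ : Fin n, (t ℓ - 1) * k ^ (n - 1 - (ℓ:ℕ)))
      + (∑ ℓ : Fin n, ((k + 1 - t ℓ) - 1) * k ^ (n - 1 - (ℓ:ℕ))) + 2 = k ^ n + 1 := by
  rw [← Finset.sum_add_distrib]
  have h1 : ∀ i : Fin n, (t i - 1) * k ^ (n - 1 - (i:ℕ)) + ((k + 1 - t i) - 1) * k ^ (n - 1 - (i:ℕ))
      = (k - 1) * k ^ (n - 1 - (i:ℕ)) := by
    intro i
    have h2 : (t i - 1) + ((k + 1 - t i) - 1) = k - 1 := by have := ht i; omega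
    calc (t i - 1) * k ^ (n - 1 - (i:ℕ)) + ((k + 1 - t i) - 1) * k ^ (n - 1 - (i:ℕ))
        = ((t i - 1) + ((k + 1 - t i) - 1)) * k ^ (n - 1 - (i:ℕ)) := by ring
      _ = (k - 1) * k ^ (n - 1 - (i:ℕ)) := by rw [h2]
  rw [Finset.sum_congr rfl (fun i _ => h1 i)]
  have := geo' k hk n
  omega

lemma landSet_iff (k n c : ℕ) (t : Fin n → ℕ) :
    t ∈ landSet k n c ↔ (∀ ℓ, 1 ≤ t ℓ ∧ t ℓ ≤ k) ∧ (∏ ℓ : Fin n, t ℓ) ≤ c ∧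
      (∏ ℓ : Fin n, (k + 1 - t ℓ)) + c ≤ k ^ n + 1 := by
  constructor
  · rintro ⟨h1, h2, h3⟩
    have hprod : ∏ ℓ : Fin n, ((k:ℤ) + 1 - (t ℓ : ℤ))
        = ((∏ ℓ : Fin n, (k + 1 - t ℓ) : ℕ) : ℤ) := by
      rw [Nat.cast_prod]
      refine Finset.prod_congr rfl fun ℓ _ => ?_
      have := (h1 ℓ).2
      rw [Nat.cast_sub (by omega : t ℓ ≤ k + 1)]
      push_cast; ring
    refine ⟨h1, ?_, ?_⟩
    · have h2' : ((∏ ℓ : Fin n, t ℓ : ℕ) : ℤ) ≤ (c : ℤ) := by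
        rw [Nat.cast_prod]; exact h2
      exact_mod_cast h2'
    · unfold chipB at h3
      rw [hprod] at h3
      have : ((∏ ℓ : Fin n, (k + 1 - t ℓ) : ℕ) : ℤ) + (c : ℤ) ≤ (k:ℤ) ^ n + 1 := by linarith
      exact_mod_cast this
  · rintro ⟨h1, h2, h3⟩
    have hprod : ∏ ℓ : Fin n, ((k:ℤ) + 1 - (t ℓ : ℤ))
        = ((∏ ℓ : Fin n, (k + 1 - t ℓ) : ℕ) : ℤ) := by
      rw [Nat.cast_prod]
      refine Finset.prod_congr rfl fun ℓ _ => ?_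
      have := (h1 ℓ).2
      rw [Nat.cast_sub (by omega : t ℓ ≤ k + 1)]
      push_cast; ring
    refine ⟨h1, ?_, ?_⟩
    · unfold chipA
      rw [show ∏ ℓ : Fin n, ((t ℓ : ℤ)) = ((∏ ℓ : Fin n, t ℓ : ℕ) : ℤ) from (Nat.cast_prod _ _).symm]
      exact_mod_cast h2
    · unfold chipB
      rw [hprod]
      have : ((∏ ℓ : Fin n, (k + 1 - t ℓ) : ℕ) : ℤ) + (c : ℤ) ≤ (k:ℤ) ^ n + 1 := by
        exact_mod_cast h3
      linarith

/-- with `m = ⌊log_k c⌋`, `y = ⌊c / k^m⌋`, `j = ⌊log_k (k^n + 1 - c)⌋`,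
`x = k + 1 - ⌊(k^n + 1 - c) / k^j⌋`, the minimum index of a vertex where chip `c` can land
is `x·k^(n-1-j)`, the maximum is `1 + (y-1)·k^(n-m-1) + k^n - k^(n-m)`, and hence the
spread of `c` is `2 + (y-1)·k^(n-m-1) + k^n - k^(n-m) - x·k^(n-1-j)`. -/
theorem spread_formula (k n c : ℕ) (hk : 2 ≤ k) (hn : 1 ≤ n)
    (hc1 : 2 ≤ c) (hc2 : c ≤ k ^ n - 1) :
    let m := Nat.log k c
    let y := c / k ^ m
    let j := Nat.log k (k ^ n + 1 - c)
    let x := k + 1 - (k ^ n + 1 - c) / k ^ j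
    IsLeast (idx k n '' landSet k n c) (x * k ^ (n - 1 - j)) ∧
    IsGreatest (idx k n '' landSet k n c)
      (1 + (y - 1) * k ^ (n - m - 1) + k ^ n - k ^ (n - m)) ∧
    (Int.ofNat (sSup (idx k n '' landSet k n c)) - Int.ofNat (sInf (idx k n '' landSet k n c)) + 1
      = 2 + ((y : ℤ) - 1) * (k : ℤ) ^ (n - m - 1) + (k : ℤ) ^ n - (k : ℤ) ^ (n - m)
          - (x : ℤ) * (k : ℤ) ^ (n - 1 - j)) := by
  intro m y j x
  have hk1 : 1 < k := hk
  have hkn2 : 2 ≤ k ^ n := by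
    calc 2 ≤ k := hk
      _ = k ^ 1 := (pow_one k).symm
      _ ≤ k ^ n := Nat.pow_le_pow_right (by omega) hn
  have hck : c < k ^ n := by omega
  set d := k ^ n + 1 - c with hd
  have hcd : c + d = k ^ n + 1 := by omega
  have hd2 : 2 ≤ d := by omega
  have hdk : d < k ^ n := by omega
  -- facts about m and y
  have hm : m = Nat.log k c := rfl
  have hy : y = c / k ^ m := rfl
  have hmle : k ^ m ≤ c := Nat.pow_log_le_self k (by omega)
  have hmlt : c < k ^ (m + 1) := Nat.lt_pow_succ_log_self hk1 c
  have hmn : m < n := Nat.log_lt_of_lt_pow (by omega) hck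
  have hkm : 0 < k ^ m := Nat.pow_pos (by omega)
  have hy1 : 1 ≤ y := by rw [hy]; exact (Nat.one_le_div_iff hkm).mpr hmle
  have hy2 : y < k := by
    rw [hy, Nat.div_lt_iff_lt_mul hkm]
    calc c < k ^ (m + 1) := hmlt
      _ = k * k ^ m := by rw [pow_succ, mul_comm]
  have hyle : y * k ^ m ≤ c := by rw [hy]; exact Nat.div_mul_le_self c (k ^ m)
  have hylt : c < (y + 1) * k ^ m := by
    have h0 : c < c / k ^ m * k ^ m + k ^ m := Nat.lt_div_mul_add hkm
    rw [← hy] at h0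
    have hr : (y + 1) * k ^ m = y * k ^ m + k ^ m := by ring
    omega
  -- facts about j, q and x
  have hj : j = Nat.log k d := rfl
  set q := d / k ^ j with hq
  have hxq : x = k + 1 - q := rfl
  have hjle : k ^ j ≤ d := Nat.pow_log_le_self k (by omega)
  have hjlt : d < k ^ (j + 1) := by rw [hj]; exact Nat.lt_pow_succ_log_self hk1 d
  have hjn : j < n := by rw [hj]; exact Nat.log_lt_of_lt_pow (by omega) hdk
  have hkj : 0 < k ^ j := Nat.pow_pos (by omega)
  have hq1 : 1 ≤ q := by rw [hq]; exact (Nat.one_le_div_iff hkj).mpr hjle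
  have hq2 : q < k := by
    rw [hq, Nat.div_lt_iff_lt_mul hkj]
    calc d < k ^ (j + 1) := hjlt
      _ = k * k ^ j := by rw [pow_succ, mul_comm]
  have hqle : q * k ^ j ≤ d := by rw [hq]; exact Nat.div_mul_le_self d (k ^ j)
  have hqlt : d < (q + 1) * k ^ j := by
    have h0 : d < d / k ^ j * k ^ j + k ^ j := Nat.lt_div_mul_add hkj
    rw [← hq] at h0
    have hr : (q + 1) * k ^ j = q * k ^ j + k ^ j := by ring
    omega
  have hx2 : 2 ≤ x := by omega
  have hxk : x ≤ k := by omega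
  -- power identities
  have hpj : k ^ (n - j) = k ^ (n - 1 - j) * k := by
    have h1 : n - j = (n - 1 - j) + 1 := by omega
    rw [h1, pow_succ]
  have hpjn : k * k ^ j * k ^ (n - 1 - j) = k ^ n := by
    rw [mul_assoc, ← pow_add]
    have h1 : j + (n - 1 - j) = n - 1 := by omega
    rw [h1, mul_comm, ← pow_succ]
    congr 1; omega
  have hpmn : k * k ^ m * k ^ (n - 1 - m) = k ^ n := by
    rw [mul_assoc, ← pow_add]
    have h1 : m + (n - 1 - m) = n - 1 := by omega
    rw [h1, mul_comm, ← pow_succ]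
    congr 1; omega
  have hpm : k ^ (n - m) = k ^ (n - 1 - m) * k := by
    have h1 : n - m = (n - 1 - m) + 1 := by omega
    rw [h1, pow_succ]
  have hemm : n - 1 - m = n - m - 1 := by omega
  have hpmle : k ^ (n - m) ≤ k ^ n := Nat.pow_le_pow_right (by omega) (by omega)
  have hK1 : 0 < k ^ (n - 1 - j) := Nat.pow_pos (by omega)
  -- ===== the minimum =====
  have hWbj := W_bounds k j q (n := n) (by omega) hq1 (by omega)
  set tmin : Fin n → ℕ := fun ℓ => k + 1 - W k j q ℓ with htmin
  have htminb : ∀ ℓ, 1 ≤ tmin ℓ ∧ tmin ℓ ≤ k := by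
    intro ℓ; have := hWbj ℓ; simp only [htmin]; omega
  have htminA : (∏ ℓ : Fin n, tmin ℓ) = x * k ^ (n - 1 - j) := by
    have h1 : (∏ ℓ : Fin n, tmin ℓ) = (k + 1 - q) * k ^ (n - 1 - j) :=
      W_prodC k (by omega) n j q hjn (by omega)
    rw [h1, ← hxq]
  have htminC : (∏ ℓ : Fin n, (k + 1 - tmin ℓ)) = q * k ^ j := by
    have h1 : ∀ ℓ : Fin n, k + 1 - tmin ℓ = W k j q ℓ := by
      intro ℓ; have := hWbj ℓ; simp only [htmin]; omega
    rw [Finset.prod_congr rfl (fun ℓ _ => h1 ℓ)]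
    exact W_prod k (by omega) n j q hjn
  have hsymmj : (q + 1) * k ^ j + (k + 1 - q) * k ^ (n - 1 - j) ≤ k ^ n + 2 := by
    have := symm_ineq k q (k ^ j) (k ^ (n - 1 - j)) hk hq1 hq2 hkj hK1
    rw [hpjn] at this
    exact this
  have htminAc : (∏ ℓ : Fin n, tmin ℓ) ≤ c := by
    rw [htminA]
    have h1 : (k + 1 - q) * k ^ (n - 1 - j) = x * k ^ (n - 1 - j) := by rw [← hxq]
    omega
  have htminmem : tmin ∈ landSet k n c := by
    rw [landSet_iff]
    refine ⟨htminb, htminAc, ?_⟩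
    rw [htminC]; omega
  have hWsq := W_sum k (by omega) n j q hjn hq1 (by omega)
  have hrefl := refl_sum k n (by omega) tmin htminb
  have htosum : (∑ ℓ : Fin n, ((k + 1 - tmin ℓ) - 1) * k ^ (n - 1 - (ℓ:ℕ)))
      = ∑ ℓ : Fin n, (W k j q ℓ - 1) * k ^ (n - 1 - (ℓ:ℕ)) := by
    refine Finset.sum_congr rfl fun ℓ _ => ?_
    have := hWbj ℓ; simp only [htmin]
    congr 2; omega
  rw [htosum] at hrefl
  have hrelx : x * k ^ (n - 1 - j) + (q - 1) * k ^ (n - 1 - j) = k ^ (n - 1 - j) * k := by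
    have h1 : x + (q - 1) = k := by omega
    calc x * k ^ (n - 1 - j) + (q - 1) * k ^ (n - 1 - j)
        = (x + (q - 1)) * k ^ (n - 1 - j) := by ring
      _ = k ^ (n - 1 - j) * k := by rw [h1]; ring
  have htminidx : idx k n tmin = x * k ^ (n - 1 - j) := by
    unfold idx
    rw [hpj] at hWsq
    omega
  have hminIsLeast : IsLeast (idx k n '' landSet k n c) (x * k ^ (n - 1 - j)) := by
    constructor
    · exact ⟨tmin, htminmem, htminidx⟩
    · rintro v ⟨t, ht, rfl⟩
      rw [landSet_iff] at ht
      obtain ⟨ht1, ht2, ht3⟩ := ht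
      by_contra hcon
      push_neg at hcon
      -- hcon : idx k n t < x * k^(n-1-j)
      have hs1 : ∀ ℓ, 1 ≤ k + 1 - t ℓ ∧ k + 1 - t ℓ ≤ k := by
        intro ℓ; have := ht1 ℓ; omega
      have hreflt := refl_sum k n (by omega) t ht1
      have hidxt : idx k n t = 1 + ∑ ℓ : Fin n, (t ℓ - 1) * k ^ (n - 1 - (ℓ:ℕ)) := rfl
      have hkey := key_s11 k hk n j q hjn hq1 hq2 (fun ℓ => k + 1 - t ℓ) hs1
      have hhyp : k ^ n + (q - 1) * k ^ (n - 1 - j) + 1 ≤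
          (∑ ℓ : Fin n, ((k + 1 - t ℓ) - 1) * k ^ (n - 1 - (ℓ:ℕ))) + k ^ (n - j) := by
        rw [hpj]
        omega
      have hbeta : (∏ ℓ : Fin n, (fun ℓ => k + 1 - t ℓ) ℓ) = ∏ ℓ : Fin n, (k + 1 - t ℓ) := rfl
      have hkc := hkey hhyp
      rw [hbeta] at hkc
      -- (q+1) * k^j ≤ ∏ (k+1-t) ≤ d < (q+1)*k^j
      have hd3 : (∏ ℓ : Fin n, (k + 1 - t ℓ)) ≤ d := by omega
      omega
  -- ===== the maximum =====
  have hWbm := W_bounds k m y (n := n) (by omega) hy1 (by omega)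
  have htmaxA : (∏ ℓ : Fin n, (W k m y) ℓ) = y * k ^ m := W_prod k (by omega) n m y hmn
  have htmaxC : (∏ ℓ : Fin n, (k + 1 - (W k m y) ℓ)) = (k + 1 - y) * k ^ (n - 1 - m) :=
    W_prodC k (by omega) n m y hmn (by omega)
  have hsymmm : (y + 1) * k ^ m + (k + 1 - y) * k ^ (n - 1 - m) ≤ k ^ n + 2 := by
    have := symm_ineq k y (k ^ m) (k ^ (n - 1 - m)) hk hy1 hy2 hkm
      (Nat.pow_pos (by omega))
    rw [hpmn] at this
    exact this
  have htmaxmem : (W k m y) ∈ landSet k n c := by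
    rw [landSet_iff]
    refine ⟨hWbm, ?_, ?_⟩
    · rw [htmaxA]; exact hyle
    · rw [htmaxC]; omega
  have hWsm := W_sum k (by omega) n m y hmn hy1 (by omega)
  have htmaxidx : idx k n (W k m y) =
      1 + (y - 1) * k ^ (n - m - 1) + k ^ n - k ^ (n - m) := by
    unfold idx
    rw [← hemm]
    omega
  have hmaxIsGreatest : IsGreatest (idx k n '' landSet k n c)
      (1 + (y - 1) * k ^ (n - m - 1) + k ^ n - k ^ (n - m)) := by
    constructor
    · exact ⟨(W k m y), htmaxmem, htmaxidx⟩
    · rintro v ⟨t, ht, rfl⟩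
      rw [landSet_iff] at ht
      obtain ⟨ht1, ht2, ht3⟩ := ht
      by_contra hcon
      push_neg at hcon
      have hidxt : idx k n t = 1 + ∑ ℓ : Fin n, (t ℓ - 1) * k ^ (n - 1 - (ℓ:ℕ)) := rfl
      have hkey := key_s11 k hk n m y hmn hy1 hy2 t ht1
      have hhyp : k ^ n + (y - 1) * k ^ (n - 1 - m) + 1 ≤
          (∑ ℓ : Fin n, (t ℓ - 1) * k ^ (n - 1 - (ℓ:ℕ))) + k ^ (n - m) := by
        rw [hemm]
        omega
      have := hkey hhyp
      omega
  refine ⟨hminIsLeast, hmaxIsGreatest, ?_⟩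
  rw [hmaxIsGreatest.csSup_eq, hminIsLeast.csInf_eq]
  have hsub1 : k ^ (n - m) ≤ 1 + (y - 1) * k ^ (n - m - 1) + k ^ n := by omega
  simp only [Int.ofNat_eq_coe]
  push_cast [Nat.cast_sub hsub1, Nat.cast_sub hy1]
  ring
end

section
/- Let k = 2 and let n ≥ 2 be a natural number. For all integers c₁, c₂ with 1 ≤ c₁, c₂ ≤ 2^n, one has S(c₁) = S(c₂) if and only if at least one of the following holds: (i) c₁ and c₂ have the same number of binary digits and that number is less than n; (ii) 2^n + 1 − c₁ and 2^n + 1 − c₂ have the same number of binary digits and that number is less than n; (iii) both c₁ and c₂ belong to {2^{n−1}, 2^{n−1} + 1}. -/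
open Finset



lemma card_filter_fin_lt (n j : ℕ) (hj : j ≤ n) :
    (univ.filter (fun ℓ : Fin n => (ℓ:ℕ) < j)).card = j := by
  rw [Finset.card_filter, Fin.sum_univ_eq_sum_range (fun i => if i < j then 1 else 0),
    ← Finset.card_filter]
  have : (range n).filter (fun i => i < j) = range j := by
    ext x; simp only [mem_filter, mem_range]; omega
  rw [this, card_range]

lemma pow_sum_aux {x y n : ℕ} (h : x + y + 1 ≤ n) :
    2 ^ (x+1) + 2 ^ (y+1) ≤ 2 ^ n + 2 := by
  wlog hxy : x ≤ y generalizing x y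
  · have := this (x := y) (y := x) (by omega) (by omega); omega
  have h3 : (2:ℕ)^x ≤ 2^(n-(y+1)) := Nat.pow_le_pow_right (by norm_num) (by omega)
  have h2 : 2^(y+1) * 2^(n-(y+1)) = 2^n := by rw [← pow_add]; congr 1; omega
  obtain ⟨b', hb'⟩ : ∃ b', 2^(y+1) = 2 + b' := ⟨2^(y+1) - 2, by have := Nat.one_lt_two_pow_iff.mpr (by omega : y+1 ≠ 0); omega⟩
  obtain ⟨c', hc'⟩ : ∃ c', 2^(n-(y+1)) = 1 + c' := ⟨2^(n-(y+1)) - 1, by have := Nat.one_le_two_pow (n := n-(y+1)); omega⟩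
  have hx1 : (2:ℕ)^(x+1) = 2 * 2^x := by ring
  nlinarith [h3, h2, hb', hc', hx1]
open Finset

lemma prodA (n : ℕ) (t : Fin n → ℕ) (ht : ∀ ℓ, 1 ≤ t ℓ ∧ t ℓ ≤ 2) :
    chipA n t = 2 ^ (univ.filter (fun ℓ => t ℓ = 2)).card := by
  unfold chipA
  rw [← Finset.prod_filter_mul_prod_filter_not univ (fun ℓ => t ℓ = 2)]
  have h1 : ∏ ℓ ∈ univ.filter (fun ℓ => t ℓ = 2), (t ℓ : ℤ) =
      2 ^ (univ.filter (fun ℓ => t ℓ = 2)).card := by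
    rw [Finset.prod_congr rfl (fun x hx => show (t x : ℤ) = 2 by
      simp only [mem_filter] at hx; rw [hx.2]; norm_num), Finset.prod_const]
  have h2 : ∏ ℓ ∈ univ.filter (fun ℓ => ¬ t ℓ = 2), (t ℓ : ℤ) = 1 := by
    rw [Finset.prod_congr rfl (fun x hx => ?_), Finset.prod_const, one_pow]
    simp only [mem_filter] at hx
    have := ht x; have : t x = 1 := by omega
    rw [this]; norm_num
  rw [h1, h2, mul_one]

lemma prodB (n : ℕ) (t : Fin n → ℕ) (ht : ∀ ℓ, 1 ≤ t ℓ ∧ t ℓ ≤ 2) :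
    chipB 2 n t = 2 ^ n + 1 - 2 ^ (n - (univ.filter (fun ℓ => t ℓ = 2)).card) := by
  simp only [chipB, Nat.cast_ofNat]
  have hcard : (univ.filter (fun ℓ => ¬ t ℓ = 2)).card = n - (univ.filter (fun ℓ => t ℓ = 2)).card := by
    have := Finset.card_filter_add_card_filter_not (s := (univ : Finset (Fin n)))
      (p := fun ℓ => t ℓ = 2)
    simp only [Finset.card_univ, Fintype.card_fin] at this
    omega
  have h : ∏ ℓ : Fin n, ((2:ℤ) + 1 - (t ℓ : ℤ)) = 2 ^ (n - (univ.filter (fun ℓ => t ℓ = 2)).card) := by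
    rw [← Finset.prod_filter_mul_prod_filter_not univ (fun ℓ => t ℓ = 2)]
    have h1 : ∏ ℓ ∈ univ.filter (fun ℓ => t ℓ = 2), ((2:ℤ) + 1 - (t ℓ : ℤ)) = 1 := by
      rw [Finset.prod_congr rfl (fun x hx => show (2:ℤ) + 1 - (t x : ℤ) = 1 by
        simp only [mem_filter] at hx; rw [hx.2]; norm_num), Finset.prod_const, one_pow]
    have h2 : ∏ ℓ ∈ univ.filter (fun ℓ => ¬ t ℓ = 2), ((2:ℤ) + 1 - (t ℓ : ℤ)) =
        2 ^ (n - (univ.filter (fun ℓ => t ℓ = 2)).card) := by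
      rw [Finset.prod_congr rfl (fun x hx => show (2:ℤ) + 1 - (t x : ℤ) = 2 by
        simp only [mem_filter] at hx
        have := ht x; have h3 : t x = 1 := by omega
        rw [h3]; norm_num), Finset.prod_const, hcard]
    rw [h1, h2, one_mul]
  rw [h]

lemma mem_landSet_iff (n c : ℕ) (hc1 : 1 ≤ c) (hc2 : c ≤ 2^n) (t : Fin n → ℕ) :
    t ∈ landSet 2 n c ↔ (∀ ℓ, 1 ≤ t ℓ ∧ t ℓ ≤ 2) ∧
      (univ.filter (fun ℓ => t ℓ = 2)).card ≤ Nat.log 2 c ∧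
      n - (univ.filter (fun ℓ => t ℓ = 2)).card ≤ Nat.log 2 (2 ^ n + 1 - c) := by
  constructor
  · rintro ⟨hv, hA, hB⟩
    refine ⟨hv, ?_, ?_⟩
    · rw [Nat.le_log_iff_pow_le (by norm_num) (by omega)]
      have := prodA n t hv
      rw [this] at hA
      exact_mod_cast hA
    · rw [Nat.le_log_iff_pow_le (by norm_num) (by omega)]
      rw [prodB n t hv] at hB
      have : ((2:ℤ)^(n - (univ.filter (fun ℓ => t ℓ = 2)).card)) ≤ ((2^n + 1 - c : ℕ) : ℤ) := by
        push_cast [Nat.cast_sub (by omega : c ≤ 2^n + 1)]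
        omega
      exact_mod_cast this
  · rintro ⟨hv, h1, h2⟩
    refine ⟨hv, ?_, ?_⟩
    · rw [prodA n t hv]
      rw [Nat.le_log_iff_pow_le (by norm_num) (by omega)] at h1
      exact_mod_cast h1
    · rw [prodB n t hv]
      rw [Nat.le_log_iff_pow_le (by norm_num) (by omega)] at h2
      have : ((2:ℕ)^(n - (univ.filter (fun ℓ => t ℓ = 2)).card) : ℤ) ≤ ((2^n + 1 - c : ℕ) : ℤ) := by
        exact_mod_cast h2
      push_cast [Nat.cast_sub (by omega : c ≤ 2^n + 1)] at this
      omega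

def tstr (n j : ℕ) : Fin n → ℕ := fun ℓ => if (ℓ : ℕ) < j then 2 else 1

lemma tstr_card (n j : ℕ) (hj : j ≤ n) :
    (Finset.univ.filter (fun ℓ => tstr n j ℓ = 2)).card = j := by
  have : (Finset.univ.filter (fun ℓ => tstr n j ℓ = 2)) =
      (Finset.univ.filter (fun ℓ : Fin n => (ℓ:ℕ) < j)) := by
    apply Finset.filter_congr
    intro x _
    simp only [tstr]
    constructor
    · intro h; by_contra hc; simp [hc] at h
    · intro h; simp [h]
  rw [this, card_filter_fin_lt n j hj]

lemma tstr_mem_iff (n c j : ℕ) (hc1 : 1 ≤ c) (hc2 : c ≤ 2^n) (hj : j ≤ n) :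
    tstr n j ∈ landSet 2 n c ↔ j ≤ Nat.log 2 c ∧ n - j ≤ Nat.log 2 (2 ^ n + 1 - c) := by
  rw [mem_landSet_iff n c hc1 hc2, tstr_card n j hj]
  have hv : ∀ ℓ, 1 ≤ tstr n j ℓ ∧ tstr n j ℓ ≤ 2 := by
    intro ℓ; simp only [tstr]; split <;> omega
  tauto

lemma log_le_n {n c : ℕ} (hc1 : 1 ≤ c) (hc2 : c ≤ 2^n) : Nat.log 2 c ≤ n := by
  have := Nat.log_mono_right (b := 2) hc2
  rwa [Nat.log_pow (by norm_num)] at this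

lemma log_add_log {n c : ℕ} (hc1 : 1 ≤ c) (hc2 : c ≤ 2^n) :
    n ≤ Nat.log 2 c + Nat.log 2 (2 ^ n + 1 - c) := by
  by_contra hcon
  push_neg at hcon
  have hca : c < 2 ^ (Nat.log 2 c + 1) := Nat.lt_pow_succ_log_self (by norm_num) c
  have hdb : 2 ^ n + 1 - c < 2 ^ (Nat.log 2 (2 ^ n + 1 - c) + 1) :=
    Nat.lt_pow_succ_log_self (by norm_num) _
  have := pow_sum_aux (n := n) (x := Nat.log 2 c) (y := Nat.log 2 (2 ^ n + 1 - c)) (by omega)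
  omega

/-- for `k = 2` and `n ≥ 2`, two chips `c₁, c₂ ∈ {1,…,2^n}` have the same set
of possible landing vertices iff (i) `c₁` and `c₂` have the same number of binary digits,
less than `n`; or (ii) `2^n + 1 - c₁` and `2^n + 1 - c₂` have the same number of binary
digits, less than `n`; or (iii) both `c₁` and `c₂` lie in `{2^(n-1), 2^(n-1) + 1}`.
(The number of binary digits of `m ≥ 1` is `⌊log₂ m⌋ + 1`.) -/
theorem same_landing_set_iff (n c₁ c₂ : ℕ) (hn : 2 ≤ n)
    (hc₁ : 1 ≤ c₁ ∧ c₁ ≤ 2 ^ n) (hc₂ : 1 ≤ c₂ ∧ c₂ ≤ 2 ^ n) :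
    landSet 2 n c₁ = landSet 2 n c₂ ↔
      (Nat.log 2 c₁ + 1 = Nat.log 2 c₂ + 1 ∧ Nat.log 2 c₁ + 1 < n) ∨
      (Nat.log 2 (2 ^ n + 1 - c₁) + 1 = Nat.log 2 (2 ^ n + 1 - c₂) + 1 ∧
        Nat.log 2 (2 ^ n + 1 - c₁) + 1 < n) ∨
      ((c₁ = 2 ^ (n - 1) ∨ c₁ = 2 ^ (n - 1) + 1) ∧
        (c₂ = 2 ^ (n - 1) ∨ c₂ = 2 ^ (n - 1) + 1)) := by
  obtain ⟨h11, h12⟩ := hc₁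
  obtain ⟨h21, h22⟩ := hc₂
  set a₁ := Nat.log 2 c₁ with ha₁
  set a₂ := Nat.log 2 c₂ with ha₂
  set b₁ := Nat.log 2 (2 ^ n + 1 - c₁) with hb₁
  set b₂ := Nat.log 2 (2 ^ n + 1 - c₂) with hb₂
  have hd1l : 1 ≤ 2 ^ n + 1 - c₁ := by omega
  have hd1r : 2 ^ n + 1 - c₁ ≤ 2 ^ n := by omega
  have hd2l : 1 ≤ 2 ^ n + 1 - c₂ := by omega
  have hd2r : 2 ^ n + 1 - c₂ ≤ 2 ^ n := by omega
  have han1 : a₁ ≤ n := log_le_n h11 h12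
  have han2 : a₂ ≤ n := log_le_n h21 h22
  have hbn1 : b₁ ≤ n := log_le_n hd1l hd1r
  have hbn2 : b₂ ≤ n := log_le_n hd2l hd2r
  have hab1 : n ≤ a₁ + b₁ := log_add_log h11 h12
  have hab2 : n ≤ a₂ + b₂ := log_add_log h21 h22
  -- useful power facts
  have hpow : (2:ℕ) ^ n = 2 * 2 ^ (n - 1) := by
    rw [← pow_succ']; congr 1; omega
  have hpow1 : (2:ℕ) ≤ 2 ^ (n - 1) := by
    calc (2:ℕ) = 2 ^ 1 := rfl
    _ ≤ 2 ^ (n - 1) := Nat.pow_le_pow_right (by norm_num) (by omega)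
  have hclow1 : 2 ^ a₁ ≤ c₁ := Nat.pow_log_le_self 2 (by omega)
  have hclow2 : 2 ^ a₂ ≤ c₂ := Nat.pow_log_le_self 2 (by omega)
  have hdlow1 : 2 ^ b₁ ≤ 2 ^ n + 1 - c₁ := Nat.pow_log_le_self 2 (by omega)
  have hdlow2 : 2 ^ b₂ ≤ 2 ^ n + 1 - c₂ := Nat.pow_log_le_self 2 (by omega)
  have hchigh1 : c₁ < 2 ^ (a₁ + 1) := Nat.lt_pow_succ_log_self (by norm_num) c₁
  have hchigh2 : c₂ < 2 ^ (a₂ + 1) := Nat.lt_pow_succ_log_self (by norm_num) c₂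
  have hdhigh1 : 2 ^ n + 1 - c₁ < 2 ^ (b₁ + 1) := Nat.lt_pow_succ_log_self (by norm_num) _
  have hdhigh2 : 2 ^ n + 1 - c₂ < 2 ^ (b₂ + 1) := Nat.lt_pow_succ_log_self (by norm_num) _
  constructor
  · intro h
    -- extract a₁ = a₂ and b₁ = b₂
    have ha : a₁ = a₂ := by
      have m1 : tstr n a₁ ∈ landSet 2 n c₂ := by
        rw [← h, tstr_mem_iff n c₁ a₁ h11 h12 han1]
        exact ⟨le_refl _, by omega⟩
      rw [tstr_mem_iff n c₂ a₁ h21 h22 han1] at m1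
      have m2 : tstr n a₂ ∈ landSet 2 n c₁ := by
        rw [h, tstr_mem_iff n c₂ a₂ h21 h22 han2]
        exact ⟨le_refl _, by omega⟩
      rw [tstr_mem_iff n c₁ a₂ h11 h12 han2] at m2
      omega
    have hb : b₁ = b₂ := by
      have m1 : tstr n (n - b₁) ∈ landSet 2 n c₂ := by
        rw [← h, tstr_mem_iff n c₁ (n - b₁) h11 h12 (by omega)]
        exact ⟨by omega, by omega⟩
      rw [tstr_mem_iff n c₂ (n - b₁) h21 h22 (by omega)] at m1
      have m2 : tstr n (n - b₂) ∈ landSet 2 n c₁ := by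
        rw [h, tstr_mem_iff n c₂ (n - b₂) h21 h22 (by omega)]
        exact ⟨by omega, by omega⟩
      rw [tstr_mem_iff n c₁ (n - b₂) h11 h12 (by omega)] at m2
      omega
    by_cases hcase1 : a₁ + 1 < n
    · exact Or.inl ⟨by omega, hcase1⟩
    by_cases hcase2 : b₁ + 1 < n
    · exact Or.inr (Or.inl ⟨by omega, hcase2⟩)
    · -- a₁ ≥ n - 1, b₁ ≥ n - 1
      refine Or.inr (Or.inr ⟨?_, ?_⟩)
      · have h1 : 2 ^ (n-1) ≤ 2 ^ a₁ := Nat.pow_le_pow_right (by norm_num) (by omega)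
        have h2 : 2 ^ (n-1) ≤ 2 ^ b₁ := Nat.pow_le_pow_right (by norm_num) (by omega)
        omega
      · have h1 : 2 ^ (n-1) ≤ 2 ^ a₂ := Nat.pow_le_pow_right (by norm_num) (by omega)
        have h2 : 2 ^ (n-1) ≤ 2 ^ b₂ := Nat.pow_le_pow_right (by norm_num) (by omega)
        omega
  · intro h
    -- in every case, derive a₁ = a₂ ∧ b₁ = b₂, then conclude set equality
    have key : a₁ = a₂ ∧ b₁ = b₂ → landSet 2 n c₁ = landSet 2 n c₂ := by
      rintro ⟨hA, hB⟩
      ext t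
      rw [mem_landSet_iff n c₁ h11 h12, mem_landSet_iff n c₂ h21 h22, ← ha₁, ← ha₂,
        ← hb₁, ← hb₂, hA, hB]
    apply key
    rcases h with ⟨hae, hal⟩ | ⟨hbe, hbl⟩ | ⟨hv1, hv2⟩
    · have ha : a₁ = a₂ := by omega
      refine ⟨ha, ?_⟩
      by_cases h0 : a₁ = 0
      · -- c₁ = c₂ = 1
        have e1 : c₁ < 2 := by rw [h0] at hchigh1; simpa using hchigh1
        have e2 : c₂ < 2 := by rw [← ha, h0] at hchigh2; simpa using hchigh2
        have hc : c₁ = c₂ := by omega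
        rw [hb₁, hb₂, hc]
      · -- both b's equal n - 1
        have hup : 2 ^ (a₁ + 1) ≤ 2 ^ (n - 1) := Nat.pow_le_pow_right (by norm_num) (by omega)
        have hlo : 2 ≤ 2 ^ a₁ := by
          calc (2:ℕ) = 2 ^ 1 := rfl
          _ ≤ 2 ^ a₁ := Nat.pow_le_pow_right (by norm_num) (by omega)
        have e1 : b₁ = n - 1 := by
          apply Nat.log_eq_of_pow_le_of_lt_pow (by omega)
          have : n - 1 + 1 = n := by omega
          rw [this]; omega
        have e2 : b₂ = n - 1 := by
          apply Nat.log_eq_of_pow_le_of_lt_pow (by rw [← ha] at hchigh2 hclow2; omega)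
          have : n - 1 + 1 = n := by omega
          rw [this]; rw [← ha] at hclow2; omega
        omega
    · have hb : b₁ = b₂ := by omega
      refine ⟨?_, hb⟩
      by_cases h0 : b₁ = 0
      · have e1 : 2 ^ n + 1 - c₁ < 2 := by rw [h0] at hdhigh1; simpa using hdhigh1
        have e2 : 2 ^ n + 1 - c₂ < 2 := by rw [← hb, h0] at hdhigh2; simpa using hdhigh2
        have hc : c₁ = c₂ := by omega
        rw [ha₁, ha₂, hc]
      · have hup : 2 ^ (b₁ + 1) ≤ 2 ^ (n - 1) := Nat.pow_le_pow_right (by norm_num) (by omega)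
        have hlo : 2 ≤ 2 ^ b₁ := by
          calc (2:ℕ) = 2 ^ 1 := rfl
          _ ≤ 2 ^ b₁ := Nat.pow_le_pow_right (by norm_num) (by omega)
        have e1 : a₁ = n - 1 := by
          apply Nat.log_eq_of_pow_le_of_lt_pow (by omega)
          have : n - 1 + 1 = n := by omega
          rw [this]; omega
        have e2 : a₂ = n - 1 := by
          apply Nat.log_eq_of_pow_le_of_lt_pow (by rw [← hb] at hdhigh2 hdlow2; omega)
          have : n - 1 + 1 = n := by omega
          rw [this]; rw [← hb] at hdlow2; omega
        omega
    · -- case (iii): compute logs of 2^(n-1) and 2^(n-1)+1 and their reflections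
      have hn1 : n - 1 + 1 = n := by omega
      have la : ∀ c, c = 2 ^ (n-1) ∨ c = 2 ^ (n-1) + 1 → Nat.log 2 c = n - 1 := by
        rintro c (rfl | rfl)
        · exact Nat.log_pow (by norm_num) _
        · apply Nat.log_eq_of_pow_le_of_lt_pow (by omega)
          rw [hn1]; omega
      have lb : ∀ c, c = 2 ^ (n-1) ∨ c = 2 ^ (n-1) + 1 → Nat.log 2 (2 ^ n + 1 - c) = n - 1 := by
        rintro c (rfl | rfl)
        · apply Nat.log_eq_of_pow_le_of_lt_pow (by omega)
          rw [hn1]; omega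
        · have : 2 ^ n + 1 - (2 ^ (n-1) + 1) = 2 ^ (n-1) := by omega
          rw [this]
          exact Nat.log_pow (by norm_num) _
      exact ⟨by rw [ha₁, ha₂, la c₁ hv1, la c₂ hv2], by rw [hb₁, hb₂, lb c₁ hv1, lb c₂ hv2]⟩
end
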